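/- arXiv:2005.11320 — 5 statements merged into one kernel-verified Lean document; each statement's English description precedes it below -/
import Mathlib

section
/- Under a single bridge outage handled by proportional control, the branch flow change on every surviving line is a PTDF-weighted superposition over the participating buses: for every line l = (i,j) ∈ E, f̃_l − f_l = f_ℓ̂ · Σ_{k∈N} α_k D_{l,kĵ}; equivalently, the line outage distribution factor K_{lℓ̂} := (f̃_l − f_l)/f_ℓ̂ equals Σ_{k : α_k>0} α_k D_{l,kĵ}. -/
open Matrix MeasureTheory

variable {n m : ℕ}

/-- Incidence matrix of an oriented network with buses `Fin (n+1)` (bus `Fin.last n` is the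
reference bus) and oriented lines indexed by `Fin m` with endpoint maps `src`, `tgt`. -/
def incM (src tgt : Fin m → Fin (n+1)) : Matrix (Fin (n+1)) (Fin m) ℝ :=
  Matrix.of fun i l => if src l = i then 1 else if tgt l = i then -1 else 0

/-- The matrix `A` built from a Laplacian `L`: its top-left `n × n` block is the inverse of the
reduced Laplacian (obtained by deleting the last row and column) and all other entries are `0`. -/
noncomputable def AmatL (L : Matrix (Fin (n+1)) (Fin (n+1)) ℝ) : Matrix (Fin (n+1)) (Fin (n+1)) ℝ :=
  Matrix.of fun i j =>
    if h : i ≠ Fin.last n ∧ j ≠ Fin.last n then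
      (L.submatrix Fin.castSucc Fin.castSucc)⁻¹ (i.castPred h.1) (j.castPred h.2)
    else 0

/-- The matrix `A` of the network with susceptance vector `b`. -/
noncomputable def Amat (src tgt : Fin m → Fin (n+1)) (b : Fin m → ℝ) : Matrix (Fin (n+1)) (Fin (n+1)) ℝ :=
  AmatL (incM src tgt * Matrix.diagonal b * (incM src tgt)ᵀ)

/-- Power transfer distribution factor `D_{l, k ĵ}`. -/
noncomputable def ptdf (src tgt : Fin m → Fin (n+1)) (b : Fin m → ℝ) (l : Fin m) (k jh : Fin (n+1)) : ℝ :=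
  b l * (Amat src tgt b (src l) k + Amat src tgt b (tgt l) jh
       - Amat src tgt b (src l) jh - Amat src tgt b (tgt l) k)

/-- The underlying simple graph of the network. -/
def netGraph (src tgt : Fin m → Fin (n+1)) : SimpleGraph (Fin (n+1)) :=
  SimpleGraph.fromRel fun a c => ∃ l, src l = a ∧ tgt l = c

/-- There is a simple path in the network from `jh` to `k` that contains line `l`. -/
def PathThrough (src tgt : Fin m → Fin (n+1)) (jh k : Fin (n+1)) (l : Fin m) : Prop :=
  ∃ w : (netGraph src tgt).Walk jh k, w.IsPath ∧ s(src l, tgt l) ∈ w.edges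

/-- Lines `e₁` and `e₂` belong to the same block: they are equal or lie on a common simple cycle. -/
def sameBlock (src tgt : Fin m → Fin (n+1)) (e₁ e₂ : Fin m) : Prop :=
  e₁ = e₂ ∨ ∃ (v : Fin (n+1)) (c : (netGraph src tgt).Walk v v),
    c.IsCycle ∧ s(src e₁, tgt e₁) ∈ c.edges ∧ s(src e₂, tgt e₂) ∈ c.edges

/-- A cut vertex: a vertex whose removal disconnects the graph. -/
def IsCutVertex {V : Type*} (G : SimpleGraph V) (v : V) : Prop :=
  ¬ (G.induce {w : V | w ≠ v}).Connected

/-- The subgraph of the network with only the lines in `S`. -/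
def netGraphOn (src tgt : Fin m → Fin (n+1)) (S : Set (Fin m)) : SimpleGraph (Fin (n+1)) :=
  SimpleGraph.fromRel fun a c => ∃ l ∈ S, src l = a ∧ tgt l = c

def maskIn (F : Finset (Fin m)) (b : Fin m → ℝ) : Fin m → ℝ := fun l => if l ∈ F then b l else 0
def maskOut (F : Finset (Fin m)) (b : Fin m → ℝ) : Fin m → ℝ := fun l => if l ∈ F then 0 else b l

/-- Column submatrix `C_F` (columns outside `F` zeroed out). -/
def CFmat (src tgt : Fin m → Fin (n+1)) (F : Finset (Fin m)) : Matrix (Fin (n+1)) (Fin m) ℝ :=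
  Matrix.of fun i l => if l ∈ F then incM src tgt i l else 0

/-- Column submatrix `C_{−F}` (columns in `F` zeroed out). -/
def CmFmat (src tgt : Fin m → Fin (n+1)) (F : Finset (Fin m)) : Matrix (Fin (n+1)) (Fin m) ℝ :=
  Matrix.of fun i l => if l ∈ F then 0 else incM src tgt i l

/-- Diagonal susceptance matrix `B_F`. -/
def BFmat (b : Fin m → ℝ) (F : Finset (Fin m)) : Matrix (Fin m) (Fin m) ℝ :=
  Matrix.diagonal (maskIn F b)

/-- Diagonal susceptance matrix `B_{−F}`. -/
def BmFmat (b : Fin m → ℝ) (F : Finset (Fin m)) : Matrix (Fin m) (Fin m) ℝ :=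
  Matrix.diagonal (maskOut F b)

/-- The matrix `A_{−F}` of the post-contingency network `(N, E ∖ F)`. -/
noncomputable def AmFmat (src tgt : Fin m → Fin (n+1)) (b : Fin m → ℝ) (F : Finset (Fin m)) :
    Matrix (Fin (n+1)) (Fin (n+1)) ℝ :=
  AmatL (CmFmat src tgt F * BmFmat b F * (CmFmat src tgt F)ᵀ)

/-- The `k`-th standard unit vector of `ℝ^{n+1}`. -/
def evec (k : Fin (n+1)) : Fin (n+1) → ℝ := Pi.single k 1

/-!
The angle change `Δθ = θ̃ - θ` satisfies `L Δθ = f_ℓ̂ (α - e_ĵ)`, a vector of total sum zero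
because `∑ α_k = 1`. On vectors of sum zero `A` is a right inverse of `L` (the reduced Laplacian
is invertible since the network is connected), and the flows `B Cᵀ θ` depend on `θ` only
through `L θ`, since the kernel of `L` consists of vectors that agree at both ends of every
line. Hence `f̃ - f = f_ℓ̂ B Cᵀ A (α - e_ĵ)`, which expands to the PTDF sum, again by
`∑ α_k = 1`.
-/

def netLaplacian (src tgt : Fin m → Fin (n+1)) (b : Fin m → ℝ) :
    Matrix (Fin (n+1)) (Fin (n+1)) ℝ :=
  incM src tgt * diagonal b * (incM src tgt)ᵀ

def lineFlows (src tgt : Fin m → Fin (n+1)) (b : Fin m → ℝ) (θ : Fin (n+1) → ℝ) : Fin m → ℝ :=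
  (diagonal b * (incM src tgt)ᵀ) *ᵥ θ

section AmatL

variable (L : Matrix (Fin (n+1)) (Fin (n+1)) ℝ)

lemma AmatL_mulVec (q : Fin (n+1) → ℝ) :
    AmatL L *ᵥ q =
      Fin.snoc ((L.submatrix Fin.castSucc Fin.castSucc)⁻¹ *ᵥ (q ∘ Fin.castSucc)) 0 := by
  funext i
  refine Fin.lastCases ?_ (fun i => ?_) i
  · simp [mulVec, dotProduct, AmatL]
  · simp [mulVec, dotProduct, AmatL, Fin.sum_univ_castSucc, (Fin.castSucc_lt_last i).ne]

lemma mulVec_snoc_zero_castSucc (v : Fin n → ℝ) (i : Fin n) :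
    (L *ᵥ Fin.snoc v 0) i.castSucc = (L.submatrix Fin.castSucc Fin.castSucc *ᵥ v) i := by
  simp [mulVec, dotProduct, Fin.sum_univ_castSucc]

/-- `A` inverts `L` on vectors of total sum zero: the reduced system fixes all coordinates but
the reference one, and vanishing column sums of `L` force the last one. -/
lemma mulVec_AmatL_mulVec (hdet : IsUnit (L.submatrix Fin.castSucc Fin.castSucc).det)
    (hcol : (1 : Fin (n+1) → ℝ) ᵥ* L = 0) (q : Fin (n+1) → ℝ) (hq : ∑ i, q i = 0) :
    L *ᵥ (AmatL L *ᵥ q) = q := by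
  have hrow : ∀ i : Fin n, (L *ᵥ (AmatL L *ᵥ q)) i.castSucc = q i.castSucc := by
    intro i
    rw [AmatL_mulVec, mulVec_snoc_zero_castSucc, mulVec_mulVec, mul_nonsing_inv _ hdet,
      one_mulVec, Function.comp_apply]
  have hsum : ∑ i, (L *ᵥ (AmatL L *ᵥ q)) i = 0 := by
    rw [← one_dotProduct, dotProduct_mulVec, hcol, zero_dotProduct]
  funext i
  refine Fin.lastCases ?_ hrow i
  rw [Fin.sum_univ_castSucc, Finset.sum_congr rfl fun i _ => hrow i] at hsum
  rw [Fin.sum_univ_castSucc] at hq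
  linarith

end AmatL

section Network

variable (src tgt : Fin m → Fin (n+1))

lemma incM_transpose_mulVec_apply (hsl : ∀ l, src l ≠ tgt l) (x : Fin (n+1) → ℝ) (l : Fin m) :
    ((incM src tgt)ᵀ *ᵥ x) l = x (src l) - x (tgt l) := by
  have hcol : ∀ i, incM src tgt i l =
      (Pi.single (src l) 1 - Pi.single (tgt l) 1 : Fin (n+1) → ℝ) i := by
    intro i
    by_cases h1 : src l = i
    · subst h1; simp [incM, hsl l]
    · by_cases h2 : tgt l = i
      · subst h2; simp [incM, h1]
      · simp [incM, h1, h2, Ne.symm h1, Ne.symm h2]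
  simp [mulVec, dotProduct, hcol, sub_mul, Pi.single_apply]

lemma one_vecMul_incM (hsl : ∀ l, src l ≠ tgt l) : (1 : Fin (n+1) → ℝ) ᵥ* incM src tgt = 0 := by
  funext l
  rw [← mulVec_transpose, incM_transpose_mulVec_apply src tgt hsl]
  simp

variable (b : Fin m → ℝ)

lemma one_vecMul_netLaplacian (hsl : ∀ l, src l ≠ tgt l) :
    (1 : Fin (n+1) → ℝ) ᵥ* netLaplacian src tgt b = 0 := by
  rw [netLaplacian, ← vecMul_vecMul, ← vecMul_vecMul, one_vecMul_incM src tgt hsl,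
    zero_vecMul, zero_vecMul]

lemma dotProduct_netLaplacian_mulVec (hsl : ∀ l, src l ≠ tgt l) (x : Fin (n+1) → ℝ) :
    x ⬝ᵥ netLaplacian src tgt b *ᵥ x = ∑ l, b l * (x (src l) - x (tgt l)) ^ 2 := by
  rw [netLaplacian, ← mulVec_mulVec, dotProduct_mulVec, ← mulVec_transpose, transpose_mul,
    diagonal_transpose, ← mulVec_mulVec]
  simp only [dotProduct, mulVec_diagonal, incM_transpose_mulVec_apply src tgt hsl]
  exact Finset.sum_congr rfl fun l _ => by ring

lemma apply_src_eq_apply_tgt_of_dotProduct_netLaplacian_mulVec_eq_zero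
    (hsl : ∀ l, src l ≠ tgt l) (hb : ∀ l, 0 < b l) (x : Fin (n+1) → ℝ)
    (hx : x ⬝ᵥ netLaplacian src tgt b *ᵥ x = 0) (l : Fin m) : x (src l) = x (tgt l) := by
  rw [dotProduct_netLaplacian_mulVec src tgt b hsl] at hx
  have hterm := (Finset.sum_eq_zero_iff_of_nonneg
    fun l _ => mul_nonneg (hb l).le (sq_nonneg _)).mp hx l (Finset.mem_univ l)
  rw [mul_eq_zero, or_iff_right (hb l).ne', sq_eq_zero_iff, sub_eq_zero] at hterm
  exact hterm

lemma apply_eq_of_reachable {x : Fin (n+1) → ℝ} (hx : ∀ l, x (src l) = x (tgt l))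
    {u v : Fin (n+1)} (h : (netGraph src tgt).Reachable u v) : x u = x v := by
  obtain ⟨w⟩ := h
  induction w with
  | nil => rfl
  | cons hadj _ ih =>
    rw [netGraph, SimpleGraph.fromRel_adj] at hadj
    rcases hadj.2 with ⟨l, rfl, rfl⟩ | ⟨l, rfl, rfl⟩
    · rw [hx l, ih]
    · rw [← hx l, ih]

/-- A kernel vector of the reduced Laplacian, extended by `0` at the reference bus, has zero
energy, hence is constant on the connected network, hence zero. -/
lemma isUnit_det_submatrix_netLaplacian (hsl : ∀ l, src l ≠ tgt l) (hb : ∀ l, 0 < b l)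
    (hconn : (netGraph src tgt).Connected) :
    IsUnit ((netLaplacian src tgt b).submatrix Fin.castSucc Fin.castSucc).det := by
  rw [isUnit_iff_ne_zero]
  intro hdet
  obtain ⟨v, hv0, hv⟩ := exists_mulVec_eq_zero_iff.mpr hdet
  set x : Fin (n+1) → ℝ := Fin.snoc v 0
  have henergy : x ⬝ᵥ netLaplacian src tgt b *ᵥ x = 0 := by
    simp [x, dotProduct, Fin.sum_univ_castSucc, mulVec_snoc_zero_castSucc, hv]
  have hedge := apply_src_eq_apply_tgt_of_dotProduct_netLaplacian_mulVec_eq_zero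
    src tgt b hsl hb x henergy
  refine hv0 (funext fun i => ?_)
  have := apply_eq_of_reachable src tgt hedge (hconn.preconnected i.castSucc (Fin.last n))
  simpa [x] using this

lemma netLaplacian_mulVec (θ : Fin (n+1) → ℝ) :
    netLaplacian src tgt b *ᵥ θ = incM src tgt *ᵥ lineFlows src tgt b θ := by
  rw [netLaplacian, lineFlows, mulVec_mulVec, Matrix.mul_assoc]

lemma lineFlows_apply (hsl : ∀ l, src l ≠ tgt l) (θ : Fin (n+1) → ℝ) (l : Fin m) :
    lineFlows src tgt b θ l = b l * (θ (src l) - θ (tgt l)) := by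
  rw [lineFlows, ← mulVec_mulVec, mulVec_diagonal, incM_transpose_mulVec_apply src tgt hsl]

lemma lineFlows_sub (θ θ' : Fin (n+1) → ℝ) :
    lineFlows src tgt b (θ - θ') = lineFlows src tgt b θ - lineFlows src tgt b θ' :=
  mulVec_sub _ _ _

lemma lineFlows_smul (c : ℝ) (θ : Fin (n+1) → ℝ) :
    lineFlows src tgt b (c • θ) = c • lineFlows src tgt b θ :=
  mulVec_smul _ _ _

/-- The difference `θ - θ'` has zero energy, so it takes equal values at both ends of every
line. -/
lemma lineFlows_eq_of_netLaplacian_mulVec_eq (hsl : ∀ l, src l ≠ tgt l) (hb : ∀ l, 0 < b l)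
    {θ θ' : Fin (n+1) → ℝ} (h : netLaplacian src tgt b *ᵥ θ = netLaplacian src tgt b *ᵥ θ') :
    lineFlows src tgt b θ = lineFlows src tgt b θ' := by
  have henergy : (θ - θ') ⬝ᵥ netLaplacian src tgt b *ᵥ (θ - θ') = 0 := by
    rw [mulVec_sub, h, sub_self, dotProduct_zero]
  have hedge := apply_src_eq_apply_tgt_of_dotProduct_netLaplacian_mulVec_eq_zero
    src tgt b hsl hb _ henergy
  rw [← sub_eq_zero, ← lineFlows_sub]
  funext l
  rw [lineFlows_apply src tgt b hsl, hedge, sub_self, mul_zero, Pi.zero_apply]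

lemma sum_mul_ptdf (hsl : ∀ l, src l ≠ tgt l) {α : Fin (n+1) → ℝ} (hα1 : ∑ k, α k = 1)
    (l : Fin m) (jh : Fin (n+1)) :
    ∑ k, α k * ptdf src tgt b l k jh =
      lineFlows src tgt b (Amat src tgt b *ᵥ (α - evec jh)) l := by
  set A := Amat src tgt b
  have hA : ∀ i, (A *ᵥ (α - evec jh)) i = ∑ k, α k * A i k - A i jh := by
    intro i
    simp [mulVec, dotProduct, evec, mul_sub, Finset.sum_sub_distrib, mul_comm, Pi.single_apply]
  have hterm : ∀ k, α k * ptdf src tgt b l k jh =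
      b l * (α k * A (src l) k - α k * A (tgt l) k)
        + b l * (A (tgt l) jh - A (src l) jh) * α k := by
    intro k
    simp only [ptdf, A]
    ring
  rw [lineFlows_apply src tgt b hsl, hA, hA, Finset.sum_congr rfl fun k _ => hterm k,
    Finset.sum_add_distrib, ← Finset.mul_sum, ← Finset.mul_sum, hα1, Finset.sum_sub_distrib]
  ring

end Network

lemma sum_smul_evec (α : Fin (n+1) → ℝ) : ∑ k, α k • evec k = α := by
  funext i
  simp [evec, Finset.sum_apply, Pi.single_apply]

theorem bridge_outage_flow_change_general
    {n m : ℕ} (src tgt : Fin m → Fin (n+1)) (hsl : ∀ l, src l ≠ tgt l)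
    (b : Fin m → ℝ) (hb : ∀ l, 0 < b l)
    (hconn : (netGraph src tgt).Connected)
    (α : Fin (n+1) → ℝ) (hα1 : ∑ k, α k = 1)
    (jhat : Fin (n+1)) (flhat : ℝ)
    (p θ θt : Fin (n+1) → ℝ) (f ft : Fin m → ℝ)
    (hpre1 : (incM src tgt).mulVec f = p + flhat • evec jhat)
    (hpre2 : f = (Matrix.diagonal b * (incM src tgt)ᵀ).mulVec θ)
    (hpost1 : (incM src tgt).mulVec ft = p + flhat • ∑ k, α k • evec k)
    (hpost2 : ft = (Matrix.diagonal b * (incM src tgt)ᵀ).mulVec θt) :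
    ∀ l, ft l - f l = flhat * ∑ k, α k * ptdf src tgt b l k jhat := by
  intro l
  set q := flhat • (α - evec jhat) with hq_def
  have hflows : ft - f = lineFlows src tgt b (θt - θ) := by
    rw [hpost2, hpre2, ← mulVec_sub]
    rfl
  have hinj : netLaplacian src tgt b *ᵥ (θt - θ) = q := by
    rw [netLaplacian_mulVec, ← hflows, mulVec_sub, hpost1, hpre1, sum_smul_evec, hq_def,
      smul_sub]
    abel
  have hq : ∑ i, q i = 0 := by
    simp [q, evec, Finset.sum_sub_distrib, hα1, ← Finset.mul_sum]
  have hAq : netLaplacian src tgt b *ᵥ (Amat src tgt b *ᵥ q) = q :=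
    mulVec_AmatL_mulVec _ (isUnit_det_submatrix_netLaplacian src tgt b hsl hb hconn)
      (one_vecMul_netLaplacian src tgt b hsl) q hq
  calc ft l - f l = lineFlows src tgt b (Amat src tgt b *ᵥ q) l := by
        rw [← Pi.sub_apply, hflows,
          lineFlows_eq_of_netLaplacian_mulVec_eq src tgt b hsl hb (hinj.trans hAq.symm)]
    _ = flhat * ∑ k, α k * ptdf src tgt b l k jhat := by
        rw [mulVec_smul, lineFlows_smul, sum_mul_ptdf src tgt b hsl hα1, Pi.smul_apply,
          smul_eq_mul]

/-- bridge outage LODF formula. Under a single bridge outage at bus `jhat`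
handled by proportional control `α`, the branch flow change on every surviving line is the
PTDF-weighted superposition over participating buses:
`f̃_l − f_l = f_ℓ̂ ⬝ ∑_k α_k D_{l,kĵ}` for every line `l`. -/
theorem bridge_outage_flow_change
    {n m : ℕ} (src tgt : Fin m → Fin (n+1)) (hsl : ∀ l, src l ≠ tgt l)
    (b : Fin m → ℝ) (hb : ∀ l, 0 < b l)
    (hconn : (netGraph src tgt).Connected)
    (α : Fin (n+1) → ℝ) (hα0 : ∀ k, 0 ≤ α k) (hα1 : ∑ k, α k = 1)
    (jhat : Fin (n+1)) (flhat : ℝ) (hflhat : flhat ≠ 0)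
    (p θ θt : Fin (n+1) → ℝ) (f ft : Fin m → ℝ)
    (hpre1 : (incM src tgt).mulVec f = p + flhat • evec jhat)
    (hpre2 : f = (Matrix.diagonal b * (incM src tgt)ᵀ).mulVec θ)
    (hpost1 : (incM src tgt).mulVec ft = p + flhat • ∑ k, α k • evec k)
    (hpost2 : ft = (Matrix.diagonal b * (incM src tgt)ᵀ).mulVec θt) :
    ∀ l, ft l - f l = flhat * ∑ k, α k * ptdf src tgt b l k jhat :=
  bridge_outage_flow_change_general src tgt hsl b hb hconn α hα1 jhat flhat p θ θt f ft hpre1 hpre2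
    hpost1 hpost2
end

section
/- Path-through-a-block lemma: let G be a connected graph, let C be a block of G that is 2-connected, let l = (i,j) be an edge of C, let u be a vertex of C that is not a cut vertex of G, and let v be a vertex of G not belonging to C. Then there exists a simple path in G from v to u that contains the edge l. -/
/-- `H` has no cut vertex of its own. -/
def HasNoCutVertex {V : Type*} (H : SimpleGraph V) : Prop :=
  ∀ v : V, ¬ IsCutVertex H v

/-- `S` induces a block of `G`: a maximal connected induced subgraph having no cut vertex of
its own. -/
def IsVertexBlock {V : Type*} (G : SimpleGraph V) (S : Set V) : Prop :=
  (G.induce S).Connected ∧ HasNoCutVertex (G.induce S) ∧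
    ∀ T : Set V, S ⊆ T → (G.induce T).Connected → HasNoCutVertex (G.induce T) → T = S

/-!
Since `u` is not a cut vertex of `G`, some path from `v` to a vertex of `S` other than `u` avoids
`u`; cut it at its first vertex `x` in `S`. It remains to join `x` to `u` inside the block by a path
through `ij`, which only meets the first piece at `x`.

In a connected graph without cut vertex any two vertices are joined by two internally disjoint
paths (Whitney), hence there is a fan from `x` to `i` and `j`; with `ij` it closes to a cycle
through `x`. A path from `u` that avoids `x` reaches this cycle at some `z ≠ x` first, and the
required path runs from `x` around the cycle via `ij` to `z`, then back to `u`.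
-/

namespace SimpleGraph

open Walk

variable {V : Type*} {G : SimpleGraph V}

namespace Walk

theorem IsPath.append_of_support_inter {u v w : V} {p : G.Walk u v} {q : G.Walk v w}
    (hp : p.IsPath) (hq : q.IsPath) (hpq : ∀ x ∈ p.support, x ∈ q.support → x = v) :
    (p.append q).IsPath := by
  have hq' := q.cons_tail_support ▸ hq.support_nodup
  rw [List.nodup_cons] at hq'
  rw [isPath_def, support_append]
  refine hp.support_nodup.append hq'.2 fun x hxp hxq => ?_
  obtain rfl := hpq x hxp (q.cons_tail_support ▸ List.mem_cons_of_mem _ hxq)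
  exact hq'.1 hxq

theorem IsPath.support_takeUntil_inter_dropUntil [DecidableEq V] {u v w : V} {p : G.Walk u v}
    (hp : p.IsPath) (hw : w ∈ p.support) :
    ∀ x ∈ (p.takeUntil w hw).support, x ∈ (p.dropUntil w hw).support → x = w := by
  have hp' : ((p.takeUntil w hw).append (p.dropUntil w hw)).IsPath := (p.take_spec hw).symm ▸ hp
  intro x hx hx'
  by_contra hxw
  exact hp'.ne_of_mem_support_of_append hxw hx hx' rfl

theorem exists_walk_to_first_mem {D : Set V} {a b : V} (p : G.Walk a b) (hb : b ∈ D) :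
    ∃ z ∈ D, ∃ q : G.Walk a z, q.support ⊆ p.support ∧ ∀ y ∈ q.support, y ∈ D → y = z := by
  induction p with
  | nil => exact ⟨_, hb, nil, by simp, by simp⟩
  | @cons a _ _ h p ih =>
    by_cases ha : a ∈ D
    · exact ⟨a, ha, nil, by simp, by simp⟩
    · obtain ⟨z, hz, q, hqp, hqD⟩ := ih hb
      refine ⟨z, hz, cons h q, ?_, ?_⟩
      · simpa using List.cons_subset_cons a hqp
      · intro y hy hyD
        rcases List.mem_cons.mp hy with rfl | hy
        · exact absurd hyD ha
        · exact hqD y hy hyD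

end Walk

theorem exists_isPath_of_not_isCutVertex {w a b : V} (hw : ¬IsCutVertex G w) (ha : a ≠ w)
    (hb : b ≠ w) : ∃ p : G.Walk a b, p.IsPath ∧ w ∉ p.support := by
  classical
  obtain ⟨p⟩ := (not_not.mp hw) ⟨a, ha⟩ ⟨b, hb⟩
  let p' : G.Walk a b := p.map (Embedding.induce {x | x ≠ w}).toHom
  refine ⟨p'.bypass, p'.bypass_isPath, fun hw' => ?_⟩
  have hwp' := p'.support_bypass_subset_support hw'
  rw [show p'.support = _ from Walk.support_map _ _, List.mem_map] at hwp'
  obtain ⟨y, -, hyw⟩ := hwp'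
  exact y.2 hyw

theorem exists_isPath_to_set_avoiding {w b d : V} {D : Set V} (hw : ¬IsCutVertex G w)
    (hb : b ≠ w) (hd : d ∈ D) (hdw : d ≠ w) :
    ∃ z ∈ D, z ≠ w ∧ ∃ T : G.Walk b z, T.IsPath ∧ ∀ y ∈ T.support, y ∈ D → y = z := by
  classical
  obtain ⟨p, -, hwp⟩ := exists_isPath_of_not_isCutVertex hw hb hdw
  obtain ⟨z, hz, q, hqp, hqD⟩ := p.exists_walk_to_first_mem hd
  have hwq : w ∉ q.bypass.support := fun h => hwp (hqp (q.support_bypass_subset_support h))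
  exact ⟨z, hz, fun h => hwq (h ▸ q.bypass.end_mem_support), q.bypass, q.bypass_isPath,
    fun y hy => hqD y (q.support_bypass_subset_support hy)⟩

/-- `R` is `P₁` up to `z` followed by `T` backwards; together with `P₂` it is a fan from `b`. -/
theorem exists_fan_of_mem {b y₁ y₂ z : V} {P₁ P₂ : G.Walk b y₁} (hP₁ : P₁.IsPath)
    (hI : ∀ x ∈ P₁.support, x ∈ P₂.support → x = b ∨ x = y₁)
    (hz : z ∈ P₁.support) (hzy₁ : z ≠ y₁) {T : G.Walk y₂ z} (hT : T.IsPath)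
    (hTD : ∀ x ∈ T.support, x ∈ P₁.support ∨ x ∈ P₂.support → x = z) :
    ∃ R : G.Walk b y₂, R.IsPath ∧ ∀ x ∈ P₂.support, x ∈ R.support → x = b := by
  classical
  have hy₁ : y₁ ∉ (P₁.takeUntil z hz).support :=
    endpoint_notMem_support_takeUntil hP₁ hz hzy₁.symm
  refine ⟨(P₁.takeUntil z hz).append T.reverse, ?_, ?_⟩
  · refine (hP₁.takeUntil hz).append_of_support_inter hT.reverse fun x hx hxT => ?_
    exact hTD x (by simpa using hxT) (Or.inl (P₁.support_takeUntil_subset_support hz hx))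
  · intro x hx₂ hxR
    rcases (mem_support_append_iff _ _).mp hxR with hx₁ | hxT
    · refine (hI x (P₁.support_takeUntil_subset_support hz hx₁) hx₂).resolve_right ?_
      rintro rfl
      exact hy₁ hx₁
    · obtain rfl := hTD x (by simpa using hxT) (Or.inr hx₂)
      exact (hI x hz hx₂).resolve_right hzy₁

theorem exists_fan_of_internallyDisjoint {b y₁ y₂ : V} (hy₁ : ¬IsCutVertex G y₁)
    (hby₁ : b ≠ y₁) (hy₂y₁ : y₂ ≠ y₁) {P₁ P₂ : G.Walk b y₁} (hP₁ : P₁.IsPath)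
    (hP₂ : P₂.IsPath) (hI : ∀ x ∈ P₁.support, x ∈ P₂.support → x = b ∨ x = y₁) :
    ∃ (R₁ : G.Walk b y₁) (R₂ : G.Walk b y₂),
      R₁.IsPath ∧ R₂.IsPath ∧ ∀ x ∈ R₁.support, x ∈ R₂.support → x = b := by
  obtain ⟨z, hz, hzy₁, T, hT, hTD⟩ :=
    exists_isPath_to_set_avoiding (D := {x | x ∈ P₁.support ∨ x ∈ P₂.support}) hy₁ hy₂y₁
      (Or.inl P₁.start_mem_support) hby₁
  rcases hz with hz | hz
  · obtain ⟨R, hR, hRP⟩ := exists_fan_of_mem hP₁ hI hz hzy₁ hT hTD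
    exact ⟨P₂, R, hP₂, hR, hRP⟩
  · obtain ⟨R, hR, hRP⟩ := exists_fan_of_mem hP₂ (fun x h₂ h₁ => hI x h₁ h₂) hz hzy₁ hT
      fun x hx hD => hTD x hx hD.symm
    exact ⟨P₁, R, hP₁, hR, hRP⟩

/-- Whitney's theorem, by induction along the walk: the fan from `b` to the last two vertices of
the walk, closed up by its last edge. -/
theorem exists_internallyDisjoint_isPaths_of_walk (hnc : HasNoCutVertex G) {a b : V}
    (p : G.Walk a b) (hab : a ≠ b) :
    ∃ P₁ P₂ : G.Walk b a,
      P₁.IsPath ∧ P₂.IsPath ∧ ∀ x ∈ P₁.support, x ∈ P₂.support → x = b ∨ x = a := by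
  induction p with
  | nil => exact absurd rfl hab
  | @cons a w b h q ih =>
    by_cases hwb : w = b
    · subst hwb
      exact ⟨h.symm.toWalk, h.symm.toWalk, h.symm.isPath_toWalk, h.symm.isPath_toWalk, by simp⟩
    · obtain ⟨P₁, P₂, hP₁, hP₂, hI⟩ := ih hwb
      obtain ⟨R₁, R₂, hR₁, hR₂, hR⟩ :=
        exists_fan_of_internallyDisjoint (hnc w) (Ne.symm hwb) h.ne hP₁ hP₂ hI
      refine ⟨R₂, R₁.concat h.symm, hR₂,
        hR₁.concat (h := h.symm) fun ha => hab (hR a ha R₂.end_mem_support), ?_⟩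
      intro x hx₂ hx₁
      rw [support_concat, List.mem_append, List.mem_singleton] at hx₁
      rcases hx₁ with hx₁ | rfl
      · exact Or.inl (hR x hx₁ hx₂)
      · exact Or.inr rfl

theorem exists_fan (hc : G.Connected) (hnc : HasNoCutVertex G) {b y₁ y₂ : V} (hby₁ : b ≠ y₁)
    (hy₂y₁ : y₂ ≠ y₁) :
    ∃ (R₁ : G.Walk b y₁) (R₂ : G.Walk b y₂),
      R₁.IsPath ∧ R₂.IsPath ∧ ∀ x ∈ R₁.support, x ∈ R₂.support → x = b := by
  obtain ⟨P₁, P₂, hP₁, hP₂, hI⟩ :=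
    exists_internallyDisjoint_isPaths_of_walk hnc (hc.preconnected y₁ b).some hby₁.symm
  exact exists_fan_of_internallyDisjoint (hnc y₁) hby₁ hy₂y₁ hP₁ hP₂ hI

theorem exists_isPath_start_edge {x j u : V} (hx : ¬IsCutVertex G x) (hxj : G.Adj x j)
    (hxu : x ≠ u) : ∃ p : G.Walk x u, p.IsPath ∧ s(x, j) ∈ p.edges := by
  obtain ⟨p, hp, hxp⟩ := exists_isPath_of_not_isCutVertex hx hxj.ne' (Ne.symm hxu)
  exact ⟨cons hxj p, hp.cons hxp, by simp⟩

/-- `C` runs along `A₂` to `j`, crosses to `i` and returns along `A₁` to `z`. -/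
theorem exists_isPath_via_edge_of_mem {x i j z : V} (hij : G.Adj i j) (hxj : x ≠ j)
    {A₁ : G.Walk x i} {A₂ : G.Walk x j} (hA₁ : A₁.IsPath) (hA₂ : A₂.IsPath)
    (hA : ∀ y ∈ A₁.support, y ∈ A₂.support → y = x) (hz : z ∈ A₁.support) (hzx : z ≠ x) :
    ∃ C : G.Walk x z, C.IsPath ∧ s(i, j) ∈ C.edges ∧
      ∀ y ∈ C.support, y ∈ A₁.support ∨ y ∈ A₂.support := by
  classical
  have hB : ∀ y ∈ (A₁.dropUntil z hz).reverse.support, y ∈ A₁.support := fun y hy =>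
    A₁.support_dropUntil_subset_support hz (by simpa using hy)
  have hjB : j ∉ (A₁.dropUntil z hz).reverse.support := fun hj =>
    hxj (hA j (hB j hj) A₂.end_mem_support).symm
  have hxB : x ∉ (A₁.dropUntil z hz).reverse.support := fun hx =>
    hzx (hA₁.support_takeUntil_inter_dropUntil hz x (start_mem_support _) (by simpa using hx)).symm
  refine ⟨A₂.append (cons hij.symm (A₁.dropUntil z hz).reverse),
    hA₂.append_of_support_inter ((hA₁.dropUntil hz).reverse.cons hjB) ?_, by simp [Sym2.eq_swap],
    ?_⟩
  · intro y hy₂ hy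
    rcases List.mem_cons.mp hy with rfl | hyB
    · rfl
    · exact absurd (hA y (hB y hyB) hy₂ ▸ hyB) hxB
  · intro y hy
    rcases (mem_support_append_iff _ _).mp hy with hy₂ | hy
    · exact Or.inr hy₂
    · rcases List.mem_cons.mp hy with rfl | hyB
      · exact Or.inr A₂.end_mem_support
      · exact Or.inl (hB y hyB)

theorem exists_isPath_through_edge_of_fan {x i j z u : V} (hij : G.Adj i j) (hxj : x ≠ j)
    {A₁ : G.Walk x i} {A₂ : G.Walk x j} (hA₁ : A₁.IsPath) (hA₂ : A₂.IsPath)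
    (hA : ∀ y ∈ A₁.support, y ∈ A₂.support → y = x) (hz : z ∈ A₁.support) (hzx : z ≠ x)
    {T : G.Walk u z} (hT : T.IsPath)
    (hTD : ∀ y ∈ T.support, y ∈ A₁.support ∨ y ∈ A₂.support → y = z) :
    ∃ p : G.Walk x u, p.IsPath ∧ s(i, j) ∈ p.edges := by
  obtain ⟨C, hC, hCe, hCA⟩ := exists_isPath_via_edge_of_mem hij hxj hA₁ hA₂ hA hz hzx
  refine ⟨C.append T.reverse, hC.append_of_support_inter hT.reverse fun y hyC hyT => ?_, by
    simp [hCe]⟩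
  exact hTD y (by simpa using hyT) (hCA y hyC)

theorem exists_isPath_through_edge (hc : G.Connected) (hnc : HasNoCutVertex G) {x u i j : V}
    (hij : G.Adj i j) (hxu : x ≠ u) : ∃ p : G.Walk x u, p.IsPath ∧ s(i, j) ∈ p.edges := by
  by_cases hxi : x = i
  · subst hxi
    exact exists_isPath_start_edge (hnc x) hij hxu
  by_cases hxj : x = j
  · subst hxj
    obtain ⟨p, hp, he⟩ := exists_isPath_start_edge (hnc x) hij.symm hxu
    exact ⟨p, hp, by rwa [Sym2.eq_swap]⟩
  obtain ⟨A₁, A₂, hA₁, hA₂, hA⟩ := exists_fan hc hnc hxi hij.ne.symm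
  obtain ⟨z, hz, hzx, T, hT, hTD⟩ :=
    exists_isPath_to_set_avoiding (D := {y | y ∈ A₁.support ∨ y ∈ A₂.support}) (hnc x)
      (Ne.symm hxu) (Or.inl A₁.end_mem_support) (Ne.symm hxi)
  rcases hz with hz | hz
  · exact exists_isPath_through_edge_of_fan hij hxj hA₁ hA₂ hA hz hzx hT hTD
  · obtain ⟨p, hp, he⟩ := exists_isPath_through_edge_of_fan hij.symm hxi hA₂ hA₁
      (fun y h₂ h₁ => hA y h₁ h₂) hz hzx hT fun y hy hD => hTD y hy hD.symm
    exact ⟨p, hp, by rwa [Sym2.eq_swap]⟩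

theorem exists_isPath_through_edge_of_induce {S : Set V} (hc : (G.induce S).Connected)
    (hnc : HasNoCutVertex (G.induce S)) {x u i j : V} (hij : G.Adj i j) (hi : i ∈ S)
    (hj : j ∈ S) (hx : x ∈ S) (hu : u ∈ S) (hxu : x ≠ u) :
    ∃ p : G.Walk x u, p.IsPath ∧ s(i, j) ∈ p.edges ∧ ∀ y ∈ p.support, y ∈ S := by
  obtain ⟨P, hP, hPe⟩ := exists_isPath_through_edge hc hnc (x := ⟨x, hx⟩) (u := ⟨u, hu⟩)
    (i := ⟨i, hi⟩) (j := ⟨j, hj⟩) hij (by simpa using hxu)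
  let f := (Embedding.induce (G := G) S).toHom
  refine ⟨P.map f, hP.map (Embedding.induce (G := G) S).injective, ?_, fun y hy => ?_⟩
  · show s(i, j) ∈ (P.map f).edges
    rw [Walk.edges_map]
    exact List.mem_map.mpr ⟨_, hPe, rfl⟩
  · replace hy : y ∈ (P.map f).support := hy
    rw [Walk.support_map] at hy
    obtain ⟨y, -, rfl⟩ := List.mem_map.mp hy
    exact y.2

end SimpleGraph

theorem path_through_block_general {V : Type*}
    (G : SimpleGraph V)
    (S : Set V) (hS : IsVertexBlock G S)
    (i j : V) (hij : G.Adj i j) (hiS : i ∈ S) (hjS : j ∈ S)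
    (u : V) (huS : u ∈ S) (hu : ¬ IsCutVertex G u)
    (v : V) (hv : v ∉ S) :
    ∃ w : G.Walk v u, w.IsPath ∧ s(i, j) ∈ w.edges := by
  obtain ⟨hconn, hncv, -⟩ := hS
  obtain ⟨d, hdS, hdu⟩ : ∃ d ∈ S, d ≠ u := by
    by_cases hiu : i = u
    · exact ⟨j, hjS, hiu ▸ hij.ne'⟩
    · exact ⟨i, hiS, hiu⟩
  obtain ⟨x, hxS, hxu, q, hq, hqS⟩ :=
    SimpleGraph.exists_isPath_to_set_avoiding hu (ne_of_mem_of_not_mem huS hv).symm hdS hdu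
  obtain ⟨p, hp, hpe, hpS⟩ :=
    SimpleGraph.exists_isPath_through_edge_of_induce hconn hncv hij hiS hjS hxS huS hxu
  exact ⟨q.append p, hq.append_of_support_inter hp fun y hyq hyp => hqS y hyq (hpS y hyp),
    by simp [hpe]⟩

/-- path-through-a-block lemma. Let `G` be a connected graph, `S` a block of
`G` that is 2-connected (at least three vertices), `(i, j)` an edge of the block, `u` a vertex
of the block that is not a cut vertex of `G`, and `v` a vertex of `G` outside the block. Then
there is a simple path in `G` from `v` to `u` containing the edge `(i, j)`. -/
theorem path_through_block {V : Type*} [Fintype V]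
    (G : SimpleGraph V) (hG : G.Connected)
    (S : Set V) (hS : IsVertexBlock G S) (h2 : 3 ≤ S.ncard)
    (i j : V) (hij : G.Adj i j) (hiS : i ∈ S) (hjS : j ∈ S)
    (u : V) (huS : u ∈ S) (hu : ¬ IsCutVertex G u)
    (v : V) (hv : v ∉ S) :
    ∃ w : G.Walk v u, w.IsPath ∧ s(i, j) ∈ w.edges :=
  path_through_block_general G S hS i j hij hiS hjS u huS hu v hv
end

section
/- Path-to-spanning-2-forest lemma: let G be a connected graph and suppose there is a simple path in G from ĵ to k that contains the edge l = (i,j), traversed so that the path visits ĵ, then j, then i, then k in this order. Then G has a spanning forest H not containing the edge l and consisting of exactly two trees, one of which contains both i and k and the other of which contains both j and ĵ. -/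
/-!
The path is acyclic, so it extends to a spanning tree `T` of `G`. In a tree every edge is a
bridge, hence deleting `ij` from `T` leaves a spanning forest with exactly two components, one
containing `i` and one containing `j`. The two pieces of the path on either side of `ij` avoid
that edge, so they survive the deletion and put `k` with `i` and `jhat` with `j`.
-/

namespace SimpleGraph

variable {V : Type*} {G : SimpleGraph V}

namespace Walk

variable {u v w : V}

lemma edgeSet_fromEdgeSet_edgeSet (p : G.Walk u v) :
    (fromEdgeSet p.edgeSet).edgeSet = p.edgeSet := by
  rw [edgeSet_fromEdgeSet, sdiff_eq_left, Set.disjoint_left]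
  exact fun e he => G.not_isDiag_of_mem_edgeSet (p.edges_subset_edgeSet he)

lemma fromEdgeSet_edgeSet_cons (h : G.Adj u v) (p : G.Walk v w) :
    fromEdgeSet (cons h p).edgeSet = fromEdgeSet p.edgeSet ⊔ edge u v := by
  rw [edgeSet_cons, Set.insert_eq, fromEdgeSet_union, sup_comm]
  rfl

lemma not_reachable_fromEdgeSet_edgeSet (p : G.Walk v w) {x y : V} (hx : x ∉ p.support)
    (hxy : x ≠ y) : ¬ (fromEdgeSet p.edgeSet).Reachable x y := by
  rintro ⟨_ | ⟨hadj, _⟩⟩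
  · exact hxy rfl
  · exact hx (p.fst_mem_support_of_mem_edges ((fromEdgeSet_adj _).mp hadj).1)

theorem IsPath.isAcyclic_fromEdgeSet_edgeSet {p : G.Walk u v} (hp : p.IsPath) :
    (fromEdgeSet p.edgeSet).IsAcyclic := by
  induction p with
  | nil => simp [edgeSet_nil]
  | cons h p ih =>
    rw [cons_isPath_iff] at hp
    rw [fromEdgeSet_edgeSet_cons]
    exact (ih hp.1).sup_edge_of_not_reachable
      (p.not_reachable_fromEdgeSet_edgeSet hp.2 h.ne)

lemma IsPath.edge_notMem_edges_of_append_cons {x : V} {p : G.Walk u v} {q : G.Walk x w}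
    (h : G.Adj v x) (hpq : (p.append (cons h q)).IsPath) :
    s(v, x) ∉ p.edges ∧ s(v, x) ∉ q.edges := by
  have hnd := hpq.isTrail.edges_nodup
  rw [edges_append, edges_cons, List.nodup_middle, List.nodup_cons, List.mem_append] at hnd
  exact not_or.mp hnd.1

end Walk

lemma Reachable.deleteEdges_reachable_or {u v w : V} (h : G.Reachable v u) :
    (G.deleteEdges {s(u, w)}).Reachable v u ∨ (G.deleteEdges {s(u, w)}).Reachable v w := by
  obtain ⟨q⟩ := h
  induction q with
  | nil => exact .inl .rfl
  | @cons x z u hxz q ih =>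
    by_cases he : s(x, z) = s(u, w)
    · rcases Sym2.eq_iff.mp he with ⟨rfl, -⟩ | ⟨rfl, -⟩
      · exact .inl .rfl
      · exact .inr .rfl
    · have hxz' : (G.deleteEdges {s(u, w)}).Adj x z := (deleteEdges_adj ..).mpr ⟨hxz, he⟩
      exact ih.imp hxz'.reachable.trans hxz'.reachable.trans

end SimpleGraph

open SimpleGraph

theorem path_to_spanning_two_forest_general {V : Type*}
    (G : SimpleGraph V) (hG : G.Connected)
    (jhat j i k : V) (hij : G.Adj i j)
    (w₁ : G.Walk jhat j) (w₂ : G.Walk i k)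
    (hpath : (w₁.append (SimpleGraph.Walk.cons hij.symm w₂)).IsPath) :
    ∃ H : SimpleGraph V, H ≤ G ∧ H.IsAcyclic ∧ ¬ H.Adj i j ∧
      H.Reachable i k ∧ H.Reachable j jhat ∧ ¬ H.Reachable i j ∧
      ∀ v : V, H.Reachable v i ∨ H.Reachable v j := by
  set p := w₁.append (Walk.cons hij.symm w₂)
  obtain ⟨T, hpT, hTG, hT⟩ : ∃ T, fromEdgeSet p.edgeSet ≤ T ∧ T ≤ G ∧ T.IsTree :=
    hG.exists_isTree_le_of_le_of_isAcyclic
      ((fromEdgeSet_le G).mpr fun e he => p.edges_subset_edgeSet he.1)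
      hpath.isAcyclic_fromEdgeSet_edgeSet
  have hT_edges : ∀ e ∈ p.edges, e ∈ T.edgeSet := fun e he =>
    edgeSet_mono hpT (by rwa [p.edgeSet_fromEdgeSet_edgeSet])
  have hTij : T.Adj i j := hT_edges s(i, j) (by simp [p, Sym2.eq_swap])
  obtain ⟨hji₁, hji₂⟩ := hpath.edge_notMem_edges_of_append_cons hij.symm
  set H := T.deleteEdges {s(i, j)}
  have hH_reachable {x y : V} (q : G.Walk x y) (hq : ∀ e ∈ q.edges, e ∈ p.edges)
      (hji : s(j, i) ∉ q.edges) : H.Reachable x y := by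
    refine ⟨q.transfer H fun e he => ?_⟩
    have hne : e ≠ s(i, j) := by
      rintro rfl
      exact hji (Sym2.eq_swap ▸ he)
    simpa [H, edgeSet_deleteEdges] using ⟨hT_edges e (hq e he), hne⟩
  refine ⟨H, (deleteEdges_le _).trans hTG, hT.isAcyclic.anti (deleteEdges_le _), by simp [H],
    hH_reachable w₂ (by simp +contextual [p]) hji₂,
    (hH_reachable w₁ (by simp +contextual [p]) hji₁).symm,
    isAcyclic_iff_forall_adj_isBridge.mp hT.isAcyclic hTij,
    fun v => (hT.preconnected v i).deleteEdges_reachable_or⟩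

/-- path-to-spanning-2-forest lemma. Let `G` be a connected graph and suppose
there is a simple path from `jhat` to `k` containing the edge `(i, j)`, traversed so that it
visits `jhat`, then `j`, then `i`, then `k` in this order (encoded as a path of the form
`w₁ : jhat → j`, then the edge `(j, i)`, then `w₂ : i → k`). Then `G` has a spanning forest `H`
not containing the edge `(i, j)` and consisting of exactly two trees, one containing both `i`
and `k` and the other containing both `j` and `jhat`. -/
theorem path_to_spanning_two_forest {V : Type*} [Fintype V]
    (G : SimpleGraph V) (hG : G.Connected)
    (jhat j i k : V) (hij : G.Adj i j)
    (w₁ : G.Walk jhat j) (w₂ : G.Walk i k)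
    (hpath : (w₁.append (SimpleGraph.Walk.cons hij.symm w₂)).IsPath) :
    ∃ H : SimpleGraph V, H ≤ G ∧ H.IsAcyclic ∧ ¬ H.Adj i j ∧
      H.Reachable i k ∧ H.Reachable j jhat ∧ ¬ H.Reachable i j ∧
      ∀ v : V, H.Reachable v i ∨ H.Reachable v j :=
  path_to_spanning_two_forest_general G hG jhat j i k hij w₁ w₂ hpath
end

section
/- Pre-contingency representation of the post-contingency PTDF matrix: if the matrix I − B_F C_F^T A C_F is invertible and K^F := B_{−F} C_{−F}^T A C_F (I − B_F C_F^T A C_F)^{−1}, then the post-contingency PTDF matrix D̂^F := B_{−F} C_{−F}^T A_{−F} satisfies D̂^F = (B_{−F} C_{−F}^T + K^F B_F C_F^T) A. -/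
open Matrix MeasureTheory

variable {n m : ℕ}

/-! Taking the lines `F` out of service is a low-rank downdate of the Laplacian,
`L_{−F} = L − C_F B_F C_Fᵀ`, and likewise of the reduced Laplacians. The pre-contingency
reduced Laplacian is invertible: the quadratic form of `L` is `∑ b_l (θ_{src l} − θ_{tgt l})²`,
which on a connected network with positive susceptances vanishes only on constant vectors, and
these are killed by pinning the reference bus. The Woodbury identity then gives
`A_{−F} = A + A C_F (I − B_F C_Fᵀ A C_F)⁻¹ B_F C_Fᵀ A`, and multiplying on the left by
`B_{−F} C_{−F}ᵀ` yields the representation. -/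

section castSuccMatrix

variable {ι : Type*}

def castSuccMatrix (n : ℕ) : Matrix (Fin (n+1)) (Fin n) ℝ :=
  Matrix.of fun i j => if i = j.castSucc then 1 else 0

lemma mul_castSuccMatrix (M : Matrix ι (Fin (n+1)) ℝ) :
    M * castSuccMatrix n = M.submatrix id Fin.castSucc := by
  ext x j
  simp [castSuccMatrix, Matrix.mul_apply]

lemma castSuccMatrix_transpose_mul (M : Matrix (Fin (n+1)) ι ℝ) :
    (castSuccMatrix n)ᵀ * M = M.submatrix Fin.castSucc id := by
  ext a x
  simp [castSuccMatrix, Matrix.mul_apply]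

lemma castSuccMatrix_transpose_mul_mul (M : Matrix (Fin (n+1)) (Fin (n+1)) ℝ) :
    (castSuccMatrix n)ᵀ * M * castSuccMatrix n = M.submatrix Fin.castSucc Fin.castSucc := by
  rw [castSuccMatrix_transpose_mul, mul_castSuccMatrix, submatrix_submatrix]
  rfl

lemma castSuccMatrix_transpose_mul_self : (castSuccMatrix n)ᵀ * castSuccMatrix n = 1 := by
  rw [castSuccMatrix_transpose_mul]
  ext a b
  simp [castSuccMatrix, one_apply]

lemma castSuccMatrix_mulVec_last (v : Fin n → ℝ) :
    (castSuccMatrix n *ᵥ v) (Fin.last n) = 0 := by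
  simp [castSuccMatrix, mulVec, dotProduct, (Fin.castSucc_lt_last _).ne']

end castSuccMatrix

lemma AmatL_eq_mul (L : Matrix (Fin (n+1)) (Fin (n+1)) ℝ) :
    AmatL L =
      castSuccMatrix n * (L.submatrix Fin.castSucc Fin.castSucc)⁻¹ * (castSuccMatrix n)ᵀ := by
  ext i j
  induction i using Fin.lastCases <;> induction j using Fin.lastCases <;>
    simp [AmatL, Matrix.mul_apply, castSuccMatrix, (Fin.castSucc_lt_last _).ne']

/-- The Woodbury identity in a form that does not need `C` to be invertible. -/
theorem Matrix.sub_mul_mul_inv_eq_add {ι κ K : Type*} [Fintype ι] [DecidableEq ι] [Fintype κ]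
    [DecidableEq κ] [Field K] (A : Matrix ι ι K) (U : Matrix ι κ K) (C : Matrix κ κ K)
    (V : Matrix κ ι K) (hA : IsUnit A) (hM : IsUnit (1 - C * V * A⁻¹ * U)) :
    (A - U * C * V)⁻¹ = A⁻¹ + A⁻¹ * U * (1 - C * V * A⁻¹ * U)⁻¹ * C * V * A⁻¹ := by
  have h := add_mul_mul_inv_eq_sub A (-U) 1 (C * V) hA isUnit_one
    (by simpa [Matrix.mul_assoc, sub_eq_add_neg] using hM)
  simpa [Matrix.mul_assoc, sub_eq_add_neg] using h

lemma AmatL_sub_mul_mul {κ : Type*} [Fintype κ] [DecidableEq κ]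
    (L : Matrix (Fin (n+1)) (Fin (n+1)) ℝ) (U : Matrix (Fin (n+1)) κ ℝ) (C : Matrix κ κ ℝ)
    (V : Matrix κ (Fin (n+1)) ℝ) (hL : IsUnit (L.submatrix Fin.castSucc Fin.castSucc))
    (hM : IsUnit (1 - C * V * AmatL L * U)) :
    AmatL (L - U * C * V) =
      AmatL L + AmatL L * U * (1 - C * V * AmatL L * U)⁻¹ * C * V * AmatL L := by
  have hsub : (L - U * C * V).submatrix Fin.castSucc Fin.castSucc =
      L.submatrix Fin.castSucc Fin.castSucc -
        ((castSuccMatrix n)ᵀ * U) * C * (V * castSuccMatrix n) := by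
    rw [← castSuccMatrix_transpose_mul_mul, ← castSuccMatrix_transpose_mul_mul]
    simp only [Matrix.mul_sub, Matrix.sub_mul, Matrix.mul_assoc]
  rw [AmatL_eq_mul] at hM ⊢
  rw [AmatL_eq_mul, hsub, Matrix.sub_mul_mul_inv_eq_add _ _ _ _ hL
    (by simpa only [Matrix.mul_assoc] using hM)]
  simp only [Matrix.mul_add, Matrix.add_mul, Matrix.mul_assoc]

lemma dotProduct_mul_diagonal_mul_transpose_mulVec {ι κ R : Type*} [Fintype ι] [Fintype κ]
    [DecidableEq κ] [CommSemiring R] (C : Matrix ι κ R) (w : κ → R) (x : ι → R) :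
    x ⬝ᵥ (C * diagonal w * Cᵀ) *ᵥ x = ∑ l, w l * (Cᵀ *ᵥ x) l ^ 2 := by
  rw [← mulVec_mulVec, ← mulVec_mulVec, dotProduct_mulVec, ← mulVec_transpose]
  simp only [dotProduct, mulVec_diagonal, sq]
  exact Finset.sum_congr rfl fun l _ => by ring

lemma eq_of_incM_transpose_mulVec_eq_zero (src tgt : Fin m → Fin (n+1)) {x : Fin (n+1) → ℝ}
    {l : Fin m} (h : ((incM src tgt)ᵀ *ᵥ x) l = 0) : x (src l) = x (tgt l) := by
  by_cases hl : src l = tgt l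
  · rw [hl]
  · have hcol : ∀ i,
        incM src tgt i l = (if src l = i then 1 else 0) - (if tgt l = i then 1 else 0) := by
      intro i
      simp only [incM, of_apply]
      split_ifs <;> simp_all
    simp only [mulVec, dotProduct, transpose_apply, hcol, sub_mul, ite_mul, one_mul, zero_mul,
      Finset.sum_sub_distrib, Finset.sum_ite_eq, Finset.mem_univ, if_true] at h
    linarith

lemma SimpleGraph.Connected.eq_of_forall_adj {V β : Type*} {G : SimpleGraph V}
    (hG : G.Connected) {x : V → β} (h : ∀ a c, G.Adj a c → x a = x c) (i j : V) : x i = x j := by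
  have := ((reachable_iff_reflTransGen i j).1 (hG i j)).lift x h
  rwa [Relation.reflTransGen_eq_self] at this

lemma eq_of_dotProduct_laplacian_mulVec_eq_zero (src tgt : Fin m → Fin (n+1)) {b : Fin m → ℝ}
    (hb : ∀ l, 0 < b l) (hconn : (netGraph src tgt).Connected) {x : Fin (n+1) → ℝ}
    (hx : x ⬝ᵥ (incM src tgt * diagonal b * (incM src tgt)ᵀ) *ᵥ x = 0) (i j : Fin (n+1)) :
    x i = x j := by
  rw [dotProduct_mul_diagonal_mul_transpose_mulVec] at hx
  have hflow : ∀ l, ((incM src tgt)ᵀ *ᵥ x) l = 0 := fun l => by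
    have hl := (Finset.sum_eq_zero_iff_of_nonneg fun l _ => mul_nonneg (hb l).le (sq_nonneg _)).1
      hx l (Finset.mem_univ l)
    exact pow_eq_zero_iff two_ne_zero |>.1 ((mul_eq_zero.1 hl).resolve_left (hb l).ne')
  refine hconn.eq_of_forall_adj (fun a c hac => ?_) i j
  obtain ⟨-, ⟨l, rfl, rfl⟩ | ⟨l, rfl, rfl⟩⟩ := (SimpleGraph.fromRel_adj _ _ _).1 hac
  · exact eq_of_incM_transpose_mulVec_eq_zero src tgt (hflow l)
  · exact (eq_of_incM_transpose_mulVec_eq_zero src tgt (hflow l)).symm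

lemma isUnit_submatrix_laplacian (src tgt : Fin m → Fin (n+1)) {b : Fin m → ℝ}
    (hb : ∀ l, 0 < b l) (hconn : (netGraph src tgt).Connected) :
    IsUnit
      ((incM src tgt * diagonal b * (incM src tgt)ᵀ).submatrix Fin.castSucc Fin.castSucc) := by
  set L := incM src tgt * diagonal b * (incM src tgt)ᵀ
  set J := castSuccMatrix n
  rw [isUnit_iff_isUnit_det, isUnit_iff_ne_zero]
  intro hdet
  obtain ⟨v, hv, hLv⟩ := exists_mulVec_eq_zero_iff.2 hdet
  have hquad : (J *ᵥ v) ⬝ᵥ L *ᵥ (J *ᵥ v) = 0 := by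
    have : (J *ᵥ v) ⬝ᵥ L *ᵥ (J *ᵥ v) = v ⬝ᵥ (Jᵀ * L * J) *ᵥ v := by
      rw [← mulVec_mulVec v (Jᵀ * L), ← mulVec_mulVec _ Jᵀ, dotProduct_mulVec v Jᵀ,
        vecMul_transpose]
    rw [this, castSuccMatrix_transpose_mul_mul, hLv, dotProduct_zero]
  have hJv : J *ᵥ v = 0 := funext fun i =>
    (eq_of_dotProduct_laplacian_mulVec_eq_zero src tgt hb hconn hquad i (Fin.last n)).trans
      (castSuccMatrix_mulVec_last v)
  apply hv
  calc v = (Jᵀ * J) *ᵥ v := by rw [castSuccMatrix_transpose_mul_self, one_mulVec]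
    _ = 0 := by rw [← mulVec_mulVec, hJv, mulVec_zero]

lemma incM_mul_diagonal_mul_transpose_eq_add (src tgt : Fin m → Fin (n+1)) (b : Fin m → ℝ)
    (F : Finset (Fin m)) :
    incM src tgt * diagonal b * (incM src tgt)ᵀ =
      CmFmat src tgt F * BmFmat b F * (CmFmat src tgt F)ᵀ +
        CFmat src tgt F * BFmat b F * (CFmat src tgt F)ᵀ := by
  ext i j
  rw [Matrix.add_apply, Matrix.mul_apply, Matrix.mul_apply, Matrix.mul_apply,
    ← Finset.sum_add_distrib]
  refine Finset.sum_congr rfl fun k _ => ?_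
  simp only [Matrix.mul_diagonal, transpose_apply, CmFmat, CFmat, BmFmat, BFmat, maskOut, maskIn,
    of_apply]
  split_ifs <;> simp

lemma AmFmat_eq_add (src tgt : Fin m → Fin (n+1)) {b : Fin m → ℝ} (hb : ∀ l, 0 < b l)
    (F : Finset (Fin m)) (hconn : (netGraph src tgt).Connected)
    (hinv : IsUnit (1 - BFmat b F * (CFmat src tgt F)ᵀ * Amat src tgt b * CFmat src tgt F)) :
    AmFmat src tgt b F = Amat src tgt b + Amat src tgt b * CFmat src tgt F *
      (1 - BFmat b F * (CFmat src tgt F)ᵀ * Amat src tgt b * CFmat src tgt F)⁻¹ *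
        BFmat b F * (CFmat src tgt F)ᵀ * Amat src tgt b := by
  rw [AmFmat, eq_sub_of_add_eq (incM_mul_diagonal_mul_transpose_eq_add src tgt b F).symm]
  exact AmatL_sub_mul_mul _ _ _ _ (isUnit_submatrix_laplacian src tgt hb hconn) hinv

theorem ptdf_pre_contingency_representation_general
    {n m : ℕ} (src tgt : Fin m → Fin (n+1))
    (b : Fin m → ℝ) (hb : ∀ l, 0 < b l)
    (F : Finset (Fin m))
    (hconnPre : (netGraph src tgt).Connected)
    (hinv : IsUnit (1 - BFmat b F * (CFmat src tgt F)ᵀ * Amat src tgt b * CFmat src tgt F))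
    (KF : Matrix (Fin m) (Fin m) ℝ)
    (hKF : KF = BmFmat b F * (CmFmat src tgt F)ᵀ * Amat src tgt b * CFmat src tgt F *
      (1 - BFmat b F * (CFmat src tgt F)ᵀ * Amat src tgt b * CFmat src tgt F)⁻¹) :
    BmFmat b F * (CmFmat src tgt F)ᵀ * AmFmat src tgt b F =
      (BmFmat b F * (CmFmat src tgt F)ᵀ + KF * BFmat b F * (CFmat src tgt F)ᵀ) *
        Amat src tgt b := by
  rw [AmFmat_eq_add src tgt hb F hconnPre hinv, hKF]
  simp only [Matrix.mul_add, Matrix.add_mul, Matrix.mul_assoc]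

/-- pre-contingency representation of the post-contingency PTDF matrix.
If `I − B_F C_Fᵀ A C_F` is invertible and
`K^F = B_{−F} C_{−F}ᵀ A C_F (I − B_F C_Fᵀ A C_F)⁻¹`, then the post-contingency PTDF matrix
`D̂^F = B_{−F} C_{−F}ᵀ A_{−F}` satisfies `D̂^F = (B_{−F} C_{−F}ᵀ + K^F B_F C_Fᵀ) A`. -/
theorem ptdf_pre_contingency_representation
    {n m : ℕ} (src tgt : Fin m → Fin (n+1)) (hsl : ∀ l, src l ≠ tgt l)
    (b : Fin m → ℝ) (hb : ∀ l, 0 < b l)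
    (F : Finset (Fin m))
    (hconnPre : (netGraph src tgt).Connected)
    (hconnPost : (netGraphOn src tgt {l | l ∉ F}).Connected)
    (hinv : IsUnit (1 - BFmat b F * (CFmat src tgt F)ᵀ * Amat src tgt b * CFmat src tgt F))
    (KF : Matrix (Fin m) (Fin m) ℝ)
    (hKF : KF = BmFmat b F * (CmFmat src tgt F)ᵀ * Amat src tgt b * CFmat src tgt F *
      (1 - BFmat b F * (CFmat src tgt F)ᵀ * Amat src tgt b * CFmat src tgt F)⁻¹) :
    BmFmat b F * (CmFmat src tgt F)ᵀ * AmFmat src tgt b F =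
      (BmFmat b F * (CmFmat src tgt F)ᵀ + KF * BFmat b F * (CFmat src tgt F)ᵀ) *
        Amat src tgt b :=
  ptdf_pre_contingency_representation_general src tgt b hb F hconnPre hinv KF hKF
end

section
/- Entrywise superposition form of the cut set outage formula: under a cut set outage handled by proportional control, if I − B_F C_F^T A C_F is invertible and K^F := B_{−F} C_{−F}^T A C_F (I − B_F C_F^T A C_F)^{−1}, then for every surviving line l ∈ −F the flow change Δf_l := f̃_l − f_l satisfies Δf_l = Σ_{l̃∈F} K^F_{l l̃} ( f_{l̃} + Σ_{ℓ̂∈F_tie} Σ_{k∈N} α_k D_{l̃, k j(ℓ̂)} f_ℓ̂ ) + Σ_{ℓ̂∈F_tie} f_ℓ̂ Σ_{k∈N} α_k D_{l, k j(ℓ̂)}, where D is the pre-contingency PTDF of G. -/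
open Matrix MeasureTheory

variable {n m : ℕ}

section CutsetAux

variable {n m : ℕ}

lemma incM_apply (src tgt : Fin m → Fin (n+1)) (hsl : ∀ l, src l ≠ tgt l)
    (i : Fin (n+1)) (l : Fin m) :
    incM src tgt i l
      = (if src l = i then (1:ℝ) else 0) + (if tgt l = i then (-1:ℝ) else 0) := by
  rcases eq_or_ne (src l) i with h1 | h1 <;> rcases eq_or_ne (tgt l) i with h2 | h2
  · exact absurd (h1.trans h2.symm) (hsl l)
  all_goals simp [incM, h1, h2]

lemma incM_col_sum (src tgt : Fin m → Fin (n+1)) (hsl : ∀ l, src l ≠ tgt l) (l : Fin m) :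
    ∑ i, incM src tgt i l = 0 := by
  rw [Finset.sum_congr rfl fun i _ => incM_apply src tgt hsl i l]
  rw [Finset.sum_add_distrib, Finset.sum_ite_eq, Finset.sum_ite_eq]
  simp

lemma incMT_mulVec (src tgt : Fin m → Fin (n+1)) (hsl : ∀ l, src l ≠ tgt l)
    (z : Fin (n+1) → ℝ) (l : Fin m) :
    ((incM src tgt)ᵀ *ᵥ z) l = z (src l) - z (tgt l) := by
  simp only [Matrix.mulVec, dotProduct, Matrix.transpose_apply]
  rw [Finset.sum_congr rfl fun i _ => by rw [incM_apply src tgt hsl i l, add_mul]]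
  rw [Finset.sum_add_distrib]
  simp only [ite_mul, one_mul, zero_mul, neg_mul, neg_zero]
  rw [Finset.sum_ite_eq, Finset.sum_ite_eq]
  simp [sub_eq_add_neg]

lemma sum_incM_mulVec (src tgt : Fin m → Fin (n+1)) (hsl : ∀ l, src l ≠ tgt l)
    (v : Fin m → ℝ) : ∑ i, (incM src tgt *ᵥ v) i = 0 := by
  simp only [Matrix.mulVec, dotProduct]
  rw [Finset.sum_comm]
  refine Finset.sum_eq_zero fun l _ => ?_
  rw [← Finset.sum_mul, incM_col_sum src tgt hsl, zero_mul]

lemma Lap_col_sum (src tgt : Fin m → Fin (n+1)) (hsl : ∀ l, src l ≠ tgt l)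
    (w : Fin m → ℝ) (j : Fin (n+1)) :
    ∑ i, (incM src tgt * Matrix.diagonal w * (incM src tgt)ᵀ) i j = 0 := by
  have h : ∀ i, (incM src tgt * Matrix.diagonal w * (incM src tgt)ᵀ) i j
      = ∑ l, incM src tgt i l * (w l * incM src tgt j l) := by
    intro i
    rw [Matrix.mul_apply]
    refine Finset.sum_congr rfl fun l _ => ?_
    rw [Matrix.mul_diagonal, Matrix.transpose_apply, mul_assoc]
  simp only [h]
  rw [Finset.sum_comm]
  refine Finset.sum_eq_zero fun l _ => ?_
  rw [← Finset.sum_mul, incM_col_sum src tgt hsl, zero_mul]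

lemma quadForm (src tgt : Fin m → Fin (n+1)) (hsl : ∀ l, src l ≠ tgt l)
    (w : Fin m → ℝ) (z : Fin (n+1) → ℝ) :
    z ⬝ᵥ ((incM src tgt * Matrix.diagonal w * (incM src tgt)ᵀ) *ᵥ z)
      = ∑ l, w l * (z (src l) - z (tgt l))^2 := by
  have h2 : (Matrix.diagonal w *ᵥ ((incM src tgt)ᵀ *ᵥ z))
      = fun l => w l * (z (src l) - z (tgt l)) := by
    ext l
    rw [Matrix.mulVec_diagonal, incMT_mulVec src tgt hsl]
  have h1 : ((incM src tgt * Matrix.diagonal w * (incM src tgt)ᵀ) *ᵥ z)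
      = incM src tgt *ᵥ (fun l => w l * (z (src l) - z (tgt l))) := by
    rw [← h2, Matrix.mulVec_mulVec, Matrix.mulVec_mulVec]
  rw [h1, Matrix.dotProduct_mulVec, ← Matrix.transpose_transpose (incM src tgt),
    Matrix.vecMul_transpose]
  simp only [dotProduct, incMT_mulVec src tgt hsl]
  exact Finset.sum_congr rfl fun l _ => by ring

lemma netGraph_eq_on_univ (src tgt : Fin m → Fin (n+1)) :
    netGraph src tgt = netGraphOn src tgt Set.univ := by
  ext a c
  simp [netGraph, netGraphOn]

lemma eq_of_reachable {V : Type*} {G : SimpleGraph V} {z : V → ℝ}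
    (h : ∀ a c, G.Adj a c → z a = z c) {i j : V} (hr : G.Reachable i j) : z i = z j := by
  obtain ⟨p⟩ := hr
  induction p with
  | nil => rfl
  | cons ha _ ih => exact (h _ _ ha).trans ih

lemma const_of_graphOn (src tgt : Fin m → Fin (n+1)) (S : Set (Fin m))
    (hconn : (netGraphOn src tgt S).Connected) (z : Fin (n+1) → ℝ)
    (hz : ∀ l ∈ S, z (src l) = z (tgt l)) (i j : Fin (n+1)) : z i = z j := by
  refine eq_of_reachable ?_ (hconn.preconnected i j)
  intro a c hac
  rw [netGraphOn, SimpleGraph.fromRel_adj] at hac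
  obtain ⟨-, ⟨l, hlS, h1, h2⟩ | ⟨l, hlS, h1, h2⟩⟩ := hac
  · rw [← h1, ← h2]; exact hz l hlS
  · rw [← h1, ← h2]; exact (hz l hlS).symm

lemma edge_eq_of_kernel (src tgt : Fin m → Fin (n+1))
    (w : Fin m → ℝ) (hw0 : ∀ l, 0 ≤ w l) (z : Fin (n+1) → ℝ)
    (hz : ∑ l, w l * (z (src l) - z (tgt l))^2 = 0) :
    ∀ l, w l ≠ 0 → z (src l) = z (tgt l) := by
  intro l hl
  have h0 : ∀ i ∈ Finset.univ, (0:ℝ) ≤ w i * (z (src i) - z (tgt i))^2 :=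
    fun i _ => mul_nonneg (hw0 i) (sq_nonneg _)
  have h1 := (Finset.sum_eq_zero_iff_of_nonneg h0).mp hz l (Finset.mem_univ l)
  rcases mul_eq_zero.mp h1 with h | h
  · exact absurd h hl
  · have := (pow_eq_zero_iff two_ne_zero).mp h
    linarith [sub_eq_zero.mp this]

lemma const_of_L_kernel (src tgt : Fin m → Fin (n+1)) (hsl : ∀ l, src l ≠ tgt l)
    (w : Fin m → ℝ) (hw0 : ∀ l, 0 ≤ w l) (S : Set (Fin m)) (hwS : ∀ l ∈ S, w l ≠ 0)
    (hconn : (netGraphOn src tgt S).Connected) (z : Fin (n+1) → ℝ)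
    (hz : (incM src tgt * Matrix.diagonal w * (incM src tgt)ᵀ) *ᵥ z = 0) :
    ∀ i j, z i = z j := by
  have hq : ∑ l, w l * (z (src l) - z (tgt l))^2 = 0 := by
    rw [← quadForm src tgt hsl w z, hz, dotProduct_zero]
  exact fun i j => const_of_graphOn src tgt S hconn z
    (fun l hl => edge_eq_of_kernel src tgt w hw0 z hq l (hwS l hl)) i j

lemma CT_eq (src tgt : Fin m → Fin (n+1)) (hsl : ∀ l, src l ≠ tgt l)
    (w : Fin m → ℝ) (hw0 : ∀ l, 0 ≤ w l) (S : Set (Fin m)) (hwS : ∀ l ∈ S, w l ≠ 0)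
    (hconn : (netGraphOn src tgt S).Connected) (z1 z2 : Fin (n+1) → ℝ)
    (h : (incM src tgt * Matrix.diagonal w * (incM src tgt)ᵀ) *ᵥ z1
       = (incM src tgt * Matrix.diagonal w * (incM src tgt)ᵀ) *ᵥ z2) :
    (incM src tgt)ᵀ *ᵥ z1 = (incM src tgt)ᵀ *ᵥ z2 := by
  have hker : (incM src tgt * Matrix.diagonal w * (incM src tgt)ᵀ) *ᵥ (z1 - z2) = 0 := by
    rw [Matrix.mulVec_sub, h, sub_self]
  have hc := const_of_L_kernel src tgt hsl w hw0 S hwS hconn (z1 - z2) hker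
  ext l
  have h1 := incMT_mulVec src tgt hsl z1 l
  have h2 := incMT_mulVec src tgt hsl z2 l
  have h3 := hc (src l) (tgt l)
  simp only [Pi.sub_apply] at h3
  rw [h1, h2]
  linarith

lemma reduced_det_isUnit (src tgt : Fin m → Fin (n+1)) (hsl : ∀ l, src l ≠ tgt l)
    (w : Fin m → ℝ) (hw0 : ∀ l, 0 ≤ w l) (S : Set (Fin m)) (hwS : ∀ l ∈ S, w l ≠ 0)
    (hconn : (netGraphOn src tgt S).Connected) :
    IsUnit (((incM src tgt * Matrix.diagonal w * (incM src tgt)ᵀ).submatrix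
      Fin.castSucc Fin.castSucc).det) := by
  set L := incM src tgt * Matrix.diagonal w * (incM src tgt)ᵀ with hL
  rw [isUnit_iff_ne_zero]
  intro hdet
  obtain ⟨x, hx0, hx⟩ := (Matrix.exists_mulVec_eq_zero_iff).mpr hdet
  have hzl : (Fin.snoc x (0:ℝ) : Fin (n+1) → ℝ) (Fin.last n) = 0 := by simp
  have hzc : ∀ i : Fin n, (Fin.snoc x (0:ℝ) : Fin (n+1) → ℝ) (Fin.castSucc i) = x i := by
    intro i; simp
  have hzq : (Fin.snoc x (0:ℝ) : Fin (n+1) → ℝ) ⬝ᵥ (L *ᵥ (Fin.snoc x 0)) = 0 := by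
    simp only [dotProduct]
    rw [Fin.sum_univ_castSucc, hzl, zero_mul, add_zero]
    refine Finset.sum_eq_zero fun i _ => ?_
    have hrow : (L *ᵥ (Fin.snoc x (0:ℝ))) (Fin.castSucc i) = 0 := by
      simp only [Matrix.mulVec, dotProduct]
      rw [Fin.sum_univ_castSucc, hzl, mul_zero, add_zero]
      have hxi := congrFun hx i
      simp only [Matrix.mulVec, dotProduct, Matrix.submatrix_apply,
        Pi.zero_apply] at hxi
      rw [← hxi]
      exact Finset.sum_congr rfl fun j _ => by simp
    rw [hrow, mul_zero]
  have hq : ∑ l, w l * ((Fin.snoc x (0:ℝ) : Fin (n+1) → ℝ) (src l)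
      - (Fin.snoc x (0:ℝ) : Fin (n+1) → ℝ) (tgt l))^2 = 0 := by
    rw [← quadForm src tgt hsl w _, hzq]
  have hc := const_of_graphOn src tgt S hconn (Fin.snoc x 0)
    (fun l hl => edge_eq_of_kernel src tgt w hw0 _ hq l (hwS l hl))
  apply hx0
  ext i
  have := hc (Fin.castSucc i) (Fin.last n)
  simp only [Fin.snoc_castSucc, Fin.snoc_last] at this
  simpa using this

lemma AmatL_mulVec_last (L : Matrix (Fin (n+1)) (Fin (n+1)) ℝ) (q : Fin (n+1) → ℝ) :
    (AmatL L *ᵥ q) (Fin.last n) = 0 := by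
  simp [Matrix.mulVec, dotProduct, AmatL]

lemma AmatL_mulVec_castSucc (L : Matrix (Fin (n+1)) (Fin (n+1)) ℝ) (q : Fin (n+1) → ℝ)
    (i : Fin n) :
    (AmatL L *ᵥ q) (Fin.castSucc i)
      = ∑ j, (L.submatrix Fin.castSucc Fin.castSucc)⁻¹ i j * q (Fin.castSucc j) := by
  simp only [Matrix.mulVec, dotProduct]
  rw [Fin.sum_univ_castSucc]
  have hlast : AmatL L (Fin.castSucc i) (Fin.last n) = 0 := by
    simp [AmatL]
  rw [hlast, zero_mul, add_zero]
  refine Finset.sum_congr rfl fun j _ => ?_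
  have h1 : (Fin.castSucc i) ≠ Fin.last n := (Fin.castSucc_lt_last i).ne
  have h2 : (Fin.castSucc j) ≠ Fin.last n := (Fin.castSucc_lt_last j).ne
  simp [AmatL, h1, h2]

lemma AmatL_solve (L : Matrix (Fin (n+1)) (Fin (n+1)) ℝ)
    (hcol : ∀ j, ∑ i, L i j = 0)
    (hdet : IsUnit (L.submatrix Fin.castSucc Fin.castSucc).det)
    (q : Fin (n+1) → ℝ) (hq : ∑ i, q i = 0) :
    L *ᵥ (AmatL L *ᵥ q) = q := by
  have hxval : (L.submatrix Fin.castSucc Fin.castSucc) *ᵥ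
      (fun i => (AmatL L *ᵥ q) (Fin.castSucc i)) = fun i => q (Fin.castSucc i) := by
    have hx : (fun i => (AmatL L *ᵥ q) (Fin.castSucc i))
        = (L.submatrix Fin.castSucc Fin.castSucc)⁻¹ *ᵥ (fun j => q (Fin.castSucc j)) := by
      ext i
      rw [AmatL_mulVec_castSucc]
      rfl
    rw [hx, Matrix.mulVec_mulVec, Matrix.mul_nonsing_inv _ hdet, Matrix.one_mulVec]
  ext i
  have hexp : ∀ i : Fin (n+1), (L *ᵥ (AmatL L *ᵥ q)) i = ∑ j, L i j * (AmatL L *ᵥ q) j :=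
    fun _ => rfl
  induction i using Fin.lastCases with
  | last =>
    rw [hexp, Fin.sum_univ_castSucc, AmatL_mulVec_last, mul_zero, add_zero]
    have hrow : ∀ j : Fin n, L (Fin.last n) (Fin.castSucc j)
        = -∑ i : Fin n, L (Fin.castSucc i) (Fin.castSucc j) := by
      intro j
      have := hcol (Fin.castSucc j)
      rw [Fin.sum_univ_castSucc] at this
      linarith
    rw [Finset.sum_congr rfl fun j _ => by rw [hrow j]]
    have hqlast : q (Fin.last n) = -∑ i : Fin n, q (Fin.castSucc i) := by
      have := hq
      rw [Fin.sum_univ_castSucc] at this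
      linarith
    rw [hqlast]
    have hswap : ∑ j : Fin n, (-∑ i : Fin n, L (Fin.castSucc i) (Fin.castSucc j))
          * (AmatL L *ᵥ q) (Fin.castSucc j)
        = -∑ i : Fin n, ∑ j : Fin n, L (Fin.castSucc i) (Fin.castSucc j)
          * (AmatL L *ᵥ q) (Fin.castSucc j) := by
      have e1 : ∀ j : Fin n, (-∑ i : Fin n, L (Fin.castSucc i) (Fin.castSucc j))
            * (AmatL L *ᵥ q) (Fin.castSucc j)
          = -∑ i : Fin n, L (Fin.castSucc i) (Fin.castSucc j)
            * (AmatL L *ᵥ q) (Fin.castSucc j) := by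
        intro j; rw [neg_mul, Finset.sum_mul]
      rw [Finset.sum_congr rfl fun j _ => e1 j, Finset.sum_neg_distrib, Finset.sum_comm]
    rw [hswap]
    congr 1
    exact Finset.sum_congr rfl fun i _ => congrFun hxval i
  | cast i =>
    rw [hexp, Fin.sum_univ_castSucc, AmatL_mulVec_last, mul_zero, add_zero]
    exact congrFun hxval i

lemma maskInOut (F : Finset (Fin m)) (b : Fin m → ℝ) : maskOut F b + maskIn F b = b := by
  funext l
  simp only [maskIn, maskOut, Pi.add_apply]
  split <;> ring

lemma BF_mul_CFT (src tgt : Fin m → Fin (n+1)) (b : Fin m → ℝ) (F : Finset (Fin m)) :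
    BFmat b F * (CFmat src tgt F)ᵀ = BFmat b F * (incM src tgt)ᵀ := by
  ext l i
  simp only [BFmat, Matrix.diagonal_mul, Matrix.transpose_apply, CFmat, Matrix.of_apply, maskIn]
  by_cases h : l ∈ F <;> simp [h]

lemma BmF_mul_CmFT (src tgt : Fin m → Fin (n+1)) (b : Fin m → ℝ) (F : Finset (Fin m)) :
    BmFmat b F * (CmFmat src tgt F)ᵀ = BmFmat b F * (incM src tgt)ᵀ := by
  ext l i
  simp only [BmFmat, Matrix.diagonal_mul, Matrix.transpose_apply, CmFmat, Matrix.of_apply,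
    maskOut]
  by_cases h : l ∈ F <;> simp [h]

lemma CF_mul_BF (src tgt : Fin m → Fin (n+1)) (b : Fin m → ℝ) (F : Finset (Fin m)) :
    CFmat src tgt F * BFmat b F = incM src tgt * BFmat b F := by
  ext i l
  simp only [BFmat, Matrix.mul_diagonal, CFmat, Matrix.of_apply, maskIn]
  by_cases h : l ∈ F <;> simp [h]

lemma CmF_mul_BmF (src tgt : Fin m → Fin (n+1)) (b : Fin m → ℝ) (F : Finset (Fin m)) :
    CmFmat src tgt F * BmFmat b F = incM src tgt * BmFmat b F := by
  ext i l
  simp only [BmFmat, Matrix.mul_diagonal, CmFmat, Matrix.of_apply, maskOut]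
  by_cases h : l ∈ F <;> simp [h]

lemma ptdf_weighted_sum (src tgt : Fin m → Fin (n+1)) (b : Fin m → ℝ)
    (α : Fin (n+1) → ℝ) (hα1 : ∑ k, α k = 1) (l : Fin m) (jh : Fin (n+1)) :
    ∑ k, α k * ptdf src tgt b l k jh
      = b l * ((∑ k, α k * (Amat src tgt b (src l) k - Amat src tgt b (tgt l) k))
          - (Amat src tgt b (src l) jh - Amat src tgt b (tgt l) jh)) := by
  have h : ∀ k, α k * ptdf src tgt b l k jh
      = b l * (α k * (Amat src tgt b (src l) k - Amat src tgt b (tgt l) k))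
        - α k * (b l * (Amat src tgt b (src l) jh - Amat src tgt b (tgt l) jh)) := by
    intro k; unfold ptdf; ring
  rw [Finset.sum_congr rfl fun k _ => h k, Finset.sum_sub_distrib, ← Finset.mul_sum,
    ← Finset.sum_mul, hα1, one_mul]
  ring

end CutsetAux

/-- entrywise superposition form of the cut set outage formula. Under a cut
set outage handled by proportional control, if `I − B_F C_Fᵀ A C_F` is invertible and
`K^F = B_{−F} C_{−F}ᵀ A C_F (I − B_F C_Fᵀ A C_F)⁻¹`, then for every surviving line `l ∉ F`,
`Δf_l = ∑_{l̃ ∈ F} K^F_{l l̃} (f_{l̃} + ∑_{ℓ̂ ∈ F_tie} ∑_k α_k D_{l̃, k j(ℓ̂)} f_ℓ̂)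
       + ∑_{ℓ̂ ∈ F_tie} f_ℓ̂ ∑_k α_k D_{l, k j(ℓ̂)}`,
where `D` is the pre-contingency PTDF. -/
theorem cutset_outage_entrywise
    {n m : ℕ} (src tgt : Fin m → Fin (n+1)) (hsl : ∀ l, src l ≠ tgt l)
    (b : Fin m → ℝ) (hb : ∀ l, 0 < b l)
    (F : Finset (Fin m))
    (hconnPre : (netGraph src tgt).Connected)
    (hconnPost : (netGraphOn src tgt {l | l ∉ F}).Connected)
    (hinv : IsUnit (1 - BFmat b F * (CFmat src tgt F)ᵀ * Amat src tgt b * CFmat src tgt F))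
    (KF : Matrix (Fin m) (Fin m) ℝ)
    (hKF : KF = BmFmat b F * (CmFmat src tgt F)ᵀ * Amat src tgt b * CFmat src tgt F *
      (1 - BFmat b F * (CFmat src tgt F)ᵀ * Amat src tgt b * CFmat src tgt F)⁻¹)
    (α : Fin (n+1) → ℝ) (hα0 : ∀ k, 0 ≤ α k) (hα1 : ∑ k, α k = 1)
    (ι : Type) [Fintype ι] (jmap : ι → Fin (n+1)) (ftie : ι → ℝ) (hftie : ∀ t, ftie t ≠ 0)
    (p θ θt : Fin (n+1) → ℝ) (f ft : Fin m → ℝ)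
    (hpre1 : (incM src tgt).mulVec f = p + ∑ t, ftie t • evec (jmap t))
    (hpre2 : f = (Matrix.diagonal b * (incM src tgt)ᵀ).mulVec θ)
    (hpost1 : (CmFmat src tgt F).mulVec ft = p + (∑ t, ftie t) • ∑ k, α k • evec k)
    (hpost2 : ft = (BmFmat b F * (CmFmat src tgt F)ᵀ).mulVec θt) :
    ∀ l ∉ F,
      ft l - f l =
        (∑ lt ∈ F, KF l lt *
          (f lt + ∑ t, ∑ k, α k * ptdf src tgt b lt k (jmap t) * ftie t))
        + ∑ t, ftie t * ∑ k, α k * ptdf src tgt b l k (jmap t) := by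
  classical
  intro l hl
  have hb0 : ∀ l', 0 ≤ b l' := fun l' => (hb l').le
  have hbne : ∀ l' ∈ (Set.univ : Set (Fin m)), b l' ≠ 0 := fun l' _ => (hb l').ne'
  have hconnU : (netGraphOn src tgt Set.univ).Connected := by
    rw [← netGraph_eq_on_univ]; exact hconnPre
  have hOut0 : ∀ l', 0 ≤ maskOut F b l' := by
    intro l'
    unfold maskOut
    split
    · exact le_refl 0
    · exact (hb l').le
  have hOutS : ∀ l' ∈ ({l' : Fin m | l' ∉ F} : Set (Fin m)), maskOut F b l' ≠ 0 := by
    intro l' hl'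
    have hnF : l' ∉ F := hl'
    simpa [maskOut, hnF] using (hb l').ne'
  -- abbreviations
  set q : Fin (n+1) → ℝ := p + ∑ t, ftie t • evec (jmap t) with hqdef
  set q' : Fin (n+1) → ℝ := p + (∑ t, ftie t) • ∑ k, α k • evec k with hq'def
  clear_value q q'
  set y : Fin (n+1) → ℝ := Amat src tgt b *ᵥ q' with hydef
  set x : Fin (n+1) → ℝ := AmFmat src tgt b F *ᵥ q' with hxdef
  clear_value y x
  -- Laplacian facts
  have hdetL := reduced_det_isUnit src tgt hsl b hb0 Set.univ hbne hconnU
  have hdetL' := reduced_det_isUnit src tgt hsl (maskOut F b) hOut0 _ hOutS hconnPost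
  have hcolL := Lap_col_sum src tgt hsl b
  have hcolL' := Lap_col_sum src tgt hsl (maskOut F b)
  have hsolveL : ∀ r : Fin (n+1) → ℝ, ∑ i, r i = 0 →
      (incM src tgt * Matrix.diagonal b * (incM src tgt)ᵀ) *ᵥ (Amat src tgt b *ᵥ r) = r :=
    fun r hr => AmatL_solve _ hcolL hdetL r hr
  have hsolveL' : ∀ r : Fin (n+1) → ℝ, ∑ i, r i = 0 →
      (incM src tgt * Matrix.diagonal (maskOut F b) * (incM src tgt)ᵀ) *ᵥ
        (AmatL (incM src tgt * Matrix.diagonal (maskOut F b) * (incM src tgt)ᵀ) *ᵥ r) = r :=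
    fun r hr => AmatL_solve _ hcolL' hdetL' r hr
  have hLL' : CmFmat src tgt F * BmFmat b F * (CmFmat src tgt F)ᵀ
      = incM src tgt * Matrix.diagonal (maskOut F b) * (incM src tgt)ᵀ := by
    rw [CmF_mul_BmF, Matrix.mul_assoc, BmF_mul_CmFT, ← Matrix.mul_assoc]
    rfl
  have hA'def : AmFmat src tgt b F
      = AmatL (incM src tgt * Matrix.diagonal (maskOut F b) * (incM src tgt)ᵀ) := by
    unfold AmFmat
    rw [hLL']
  -- pre-contingency balance
  have hLth : (incM src tgt * Matrix.diagonal b * (incM src tgt)ᵀ) *ᵥ θ = q := by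
    rw [Matrix.mul_assoc, ← Matrix.mulVec_mulVec, ← hpre2]
    exact hpre1
  have hsumq : ∑ i, q i = 0 := by
    rw [← hpre1]
    exact sum_incM_mulVec src tgt hsl f
  have hevec_sum : ∀ k : Fin (n+1), ∑ i, evec k i = 1 := by
    intro k
    simp [evec, Pi.single_apply]
  have hsump : ∑ i, p i = -∑ t, ftie t := by
    have h2 : ∑ i, (∑ t, ftie t • evec (jmap t)) i = ∑ t, ftie t := by
      simp only [Finset.sum_apply, Pi.smul_apply, smul_eq_mul]
      rw [Finset.sum_comm]
      exact Finset.sum_congr rfl fun t _ => by rw [← Finset.mul_sum, hevec_sum, mul_one]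
    have h3 := hsumq
    rw [hqdef] at h3
    simp only [Pi.add_apply, Finset.sum_add_distrib] at h3
    rw [h2] at h3
    linarith
  have hαevec : ∑ i, (∑ k, α k • evec k) i = 1 := by
    simp only [Finset.sum_apply, Pi.smul_apply, smul_eq_mul]
    rw [Finset.sum_comm]
    rw [Finset.sum_congr rfl fun k _ => by rw [← Finset.mul_sum, hevec_sum k, mul_one]]
    exact hα1
  have hsumq' : ∑ i, q' i = 0 := by
    rw [hq'def]
    simp only [Pi.add_apply, Finset.sum_add_distrib, Pi.smul_apply, smul_eq_mul]
    rw [← Finset.mul_sum, hαevec, mul_one, hsump]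
    ring
  -- post-contingency balance
  have hL'tht : (incM src tgt * Matrix.diagonal (maskOut F b) * (incM src tgt)ᵀ) *ᵥ θt
      = q' := by
    rw [← hLL', Matrix.mul_assoc, ← Matrix.mulVec_mulVec, ← hpost2]
    exact hpost1
  have hL'x : (incM src tgt * Matrix.diagonal (maskOut F b) * (incM src tgt)ᵀ) *ᵥ x = q' := by
    rw [hxdef, hA'def]
    exact hsolveL' _ hsumq'
  have hLy : (incM src tgt * Matrix.diagonal b * (incM src tgt)ᵀ) *ᵥ y = q' := by
    rw [hydef]
    exact hsolveL _ hsumq'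
  -- flow identities
  have hCtth : (incM src tgt)ᵀ *ᵥ θ = (incM src tgt)ᵀ *ᵥ (Amat src tgt b *ᵥ q) :=
    CT_eq src tgt hsl b hb0 Set.univ hbne hconnU _ _
      (by rw [hLth, hsolveL _ hsumq])
  have hCttht : (incM src tgt)ᵀ *ᵥ θt = (incM src tgt)ᵀ *ᵥ x :=
    CT_eq src tgt hsl (maskOut F b) hOut0 _ hOutS hconnPost _ _
      (by rw [hL'tht, hL'x])
  -- Laplacian splitting
  have hdb : Matrix.diagonal b = Matrix.diagonal (maskOut F b) + BFmat b F := by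
    ext i j
    rcases eq_or_ne i j with rfl | hij
    · by_cases hF : i ∈ F <;>
        simp [Matrix.diagonal_apply_eq, Matrix.add_apply, BFmat, maskIn, maskOut, hF]
    · simp [Matrix.diagonal_apply_ne _ hij, Matrix.add_apply, BFmat, hij]
  have hsplit : incM src tgt * Matrix.diagonal b * (incM src tgt)ᵀ
      = incM src tgt * Matrix.diagonal (maskOut F b) * (incM src tgt)ᵀ
        + incM src tgt * BFmat b F * (incM src tgt)ᵀ := by
    rw [hdb, Matrix.mul_add, Matrix.add_mul]
  have hLx : (incM src tgt * Matrix.diagonal b * (incM src tgt)ᵀ) *ᵥ x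
      = q' + (incM src tgt * BFmat b F * (incM src tgt)ᵀ) *ᵥ x := by
    rw [hsplit, Matrix.add_mulVec, hL'x]
  -- the vector u supported on F
  set u : Fin m → ℝ := BFmat b F *ᵥ ((incM src tgt)ᵀ *ᵥ x) with hudef
  clear_value u
  have hCFBFC : incM src tgt * (BFmat b F * (incM src tgt)ᵀ)
      = CFmat src tgt F * (BFmat b F * (incM src tgt)ᵀ) := by
    rw [← Matrix.mul_assoc, ← Matrix.mul_assoc, CF_mul_BF]
  have hCu : incM src tgt *ᵥ u = CFmat src tgt F *ᵥ u := by
    rw [hudef]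
    simp only [Matrix.mulVec_mulVec]
    rw [hCFBFC]
  have hrsum : ∑ i, (incM src tgt *ᵥ u) i = 0 := sum_incM_mulVec src tgt hsl u
  have hLFx : (incM src tgt * BFmat b F * (incM src tgt)ᵀ) *ᵥ x = incM src tgt *ᵥ u := by
    rw [hudef]
    simp only [Matrix.mulVec_mulVec]
    rw [Matrix.mul_assoc]
  have hLxy : (incM src tgt * Matrix.diagonal b * (incM src tgt)ᵀ) *ᵥ x
      = (incM src tgt * Matrix.diagonal b * (incM src tgt)ᵀ) *ᵥ
        (y + Amat src tgt b *ᵥ (incM src tgt *ᵥ u)) := by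
    rw [Matrix.mulVec_add, hLy, hsolveL _ hrsum, hLx, hLFx]
  have hCtx : (incM src tgt)ᵀ *ᵥ x
      = (incM src tgt)ᵀ *ᵥ y
        + (incM src tgt)ᵀ *ᵥ (Amat src tgt b *ᵥ (CFmat src tgt F *ᵥ u)) := by
    have h := CT_eq src tgt hsl b hb0 Set.univ hbne hconnU _ _ hLxy
    rw [h, Matrix.mulVec_add, hCu]
  -- fixed point equation for u
  have hMeq : BFmat b F * (incM src tgt)ᵀ * Amat src tgt b * CFmat src tgt F
      = BFmat b F * (CFmat src tgt F)ᵀ * Amat src tgt b * CFmat src tgt F := by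
    rw [BF_mul_CFT]
  set vv : Fin m → ℝ := BFmat b F *ᵥ ((incM src tgt)ᵀ *ᵥ y) with hvdef
  clear_value vv
  have hu : u = vv
      + (BFmat b F * (CFmat src tgt F)ᵀ * Amat src tgt b * CFmat src tgt F) *ᵥ u := by
    rw [← hMeq]
    nth_rewrite 1 [hudef]
    rw [hCtx, Matrix.mulVec_add, ← hvdef]
    congr 1
    simp only [Matrix.mulVec_mulVec, Matrix.mul_assoc]
  have h1Mu : (1 - BFmat b F * (CFmat src tgt F)ᵀ * Amat src tgt b * CFmat src tgt F) *ᵥ u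
      = vv := by
    rw [Matrix.sub_mulVec, Matrix.one_mulVec]
    nth_rewrite 1 [hu]
    exact add_sub_cancel_right _ _
  have hdetM : IsUnit
      (1 - BFmat b F * (CFmat src tgt F)ᵀ * Amat src tgt b * CFmat src tgt F).det :=
    (Matrix.isUnit_iff_isUnit_det _).mp hinv
  have huv : u = (1 - BFmat b F * (CFmat src tgt F)ᵀ * Amat src tgt b * CFmat src tgt F)⁻¹
      *ᵥ vv := by
    have h2 := congrArg
      (fun w => (1 - BFmat b F * (CFmat src tgt F)ᵀ * Amat src tgt b * CFmat src tgt F)⁻¹ *ᵥ w)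
      h1Mu
    rw [Matrix.mulVec_mulVec, Matrix.nonsing_inv_mul _ hdetM, Matrix.one_mulVec] at h2
    exact h2
  -- formula for ft
  have hKFeq : KF = BmFmat b F * (incM src tgt)ᵀ * Amat src tgt b * CFmat src tgt F *
      (1 - BFmat b F * (CFmat src tgt F)ᵀ * Amat src tgt b * CFmat src tgt F)⁻¹ := by
    rw [hKF, BmF_mul_CmFT]
  have hft : ft = BmFmat b F *ᵥ ((incM src tgt)ᵀ *ᵥ y) + KF *ᵥ vv := by
    rw [hpost2, BmF_mul_CmFT, ← Matrix.mulVec_mulVec, hCttht, hCtx, Matrix.mulVec_add,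
      huv, hKFeq]
    congr 1
    simp only [Matrix.mulVec_mulVec, Matrix.mul_assoc]
  -- scalar identities: pre-contingency flows and ptdf sums
  have hfform : ∀ l', f l' = b l' *
      ((Amat src tgt b *ᵥ q) (src l') - (Amat src tgt b *ᵥ q) (tgt l')) := by
    intro l'
    have h := congrFun hpre2 l'
    rw [← Matrix.mulVec_mulVec, hCtth, Matrix.mulVec_diagonal,
      incMT_mulVec src tgt hsl] at h
    exact h
  have haux : ∀ i, y i - (Amat src tgt b *ᵥ q) i
      = ∑ t, ftie t * ((∑ k, α k * Amat src tgt b i k) - Amat src tgt b i (jmap t)) := by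
    intro i
    have h1 : y i - (Amat src tgt b *ᵥ q) i = ∑ j, Amat src tgt b i j * (q' j - q j) := by
      rw [hydef]
      simp only [Matrix.mulVec, dotProduct, mul_sub, ← Finset.sum_sub_distrib]
    have h2 : ∀ j, q' j - q j = ∑ t, ftie t * (α j - evec (jmap t) j) := by
      intro j
      rw [hq'def, hqdef]
      simp only [Pi.add_apply, Pi.smul_apply, Finset.sum_apply, smul_eq_mul]
      have hw : ∑ k, α k * evec k j = α j := by
        simp [evec, Pi.single_apply]
      rw [hw, Finset.sum_mul]
      have h4 : ∀ t, ftie t * (α j - evec (jmap t) j)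
          = ftie t * α j - ftie t * evec (jmap t) j := fun t => mul_sub _ _ _
      rw [Finset.sum_congr rfl fun t _ => h4 t, Finset.sum_sub_distrib]
      ring
    rw [h1, Finset.sum_congr rfl fun j _ => by rw [h2 j, Finset.mul_sum], Finset.sum_comm]
    refine Finset.sum_congr rfl fun t _ => ?_
    have h5 : ∀ j, Amat src tgt b i j * (ftie t * (α j - evec (jmap t) j))
        = ftie t * (α j * Amat src tgt b i j)
          - ftie t * (Amat src tgt b i j * evec (jmap t) j) := fun j => by ring
    rw [Finset.sum_congr rfl fun j _ => h5 j, Finset.sum_sub_distrib,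
      ← Finset.mul_sum, ← Finset.mul_sum]
    have he : ∑ j, Amat src tgt b i j * evec (jmap t) j = Amat src tgt b i (jmap t) := by
      simp [evec, Pi.single_apply, mul_ite, mul_one, mul_zero]
    rw [he, ← mul_sub]
  have hgf : ∀ l', b l' * (((incM src tgt)ᵀ *ᵥ y) l')
      = f l' + ∑ t, ∑ k, α k * ptdf src tgt b l' k (jmap t) * ftie t := by
    intro l'
    rw [incMT_mulVec src tgt hsl, hfform l']
    have hD : ∑ t, ∑ k, α k * ptdf src tgt b l' k (jmap t) * ftie t
        = ∑ t, ftie t * (b l' * ((∑ k, α k * (Amat src tgt b (src l') k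
            - Amat src tgt b (tgt l') k))
          - (Amat src tgt b (src l') (jmap t) - Amat src tgt b (tgt l') (jmap t)))) := by
      refine Finset.sum_congr rfl fun t _ => ?_
      rw [← ptdf_weighted_sum src tgt b α hα1 l' (jmap t), ← Finset.sum_mul, mul_comm]
    rw [hD]
    have hs := haux (src l')
    have ht := haux (tgt l')
    have h3 : ∑ t, ftie t * ((∑ k, α k * Amat src tgt b (src l') k)
          - Amat src tgt b (src l') (jmap t))
        - ∑ t, ftie t * ((∑ k, α k * Amat src tgt b (tgt l') k)
          - Amat src tgt b (tgt l') (jmap t))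
        = ∑ t, ftie t * ((∑ k, α k * (Amat src tgt b (src l') k
            - Amat src tgt b (tgt l') k))
          - (Amat src tgt b (src l') (jmap t) - Amat src tgt b (tgt l') (jmap t))) := by
      rw [← Finset.sum_sub_distrib]
      refine Finset.sum_congr rfl fun t _ => ?_
      have h6 : ∑ k, α k * (Amat src tgt b (src l') k - Amat src tgt b (tgt l') k)
          = (∑ k, α k * Amat src tgt b (src l') k)
            - ∑ k, α k * Amat src tgt b (tgt l') k := by
        rw [← Finset.sum_sub_distrib]
        exact Finset.sum_congr rfl fun k _ => by ring
      rw [h6]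
      ring
    have hcomb : y (src l') - y (tgt l')
        = ((Amat src tgt b *ᵥ q) (src l') - (Amat src tgt b *ᵥ q) (tgt l'))
          + ∑ t, ftie t * ((∑ k, α k * (Amat src tgt b (src l') k
              - Amat src tgt b (tgt l') k))
            - (Amat src tgt b (src l') (jmap t)
              - Amat src tgt b (tgt l') (jmap t))) := by
      rw [← h3]
      linarith [hs, ht]
    rw [hcomb, mul_add]
    congr 1
    rw [Finset.mul_sum]
    exact Finset.sum_congr rfl fun t _ => by ring
  -- put everything together at line l
  have hftl := congrFun hft l
  simp only [Pi.add_apply] at hftl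
  have hBmFl : (BmFmat b F *ᵥ ((incM src tgt)ᵀ *ᵥ y)) l
      = b l * (((incM src tgt)ᵀ *ᵥ y) l) := by
    rw [show BmFmat b F = Matrix.diagonal (maskOut F b) from rfl, Matrix.mulVec_diagonal]
    simp [maskOut, hl]
  have hvl : ∀ lt, vv lt = if lt ∈ F then b lt * (((incM src tgt)ᵀ *ᵥ y) lt) else 0 := by
    intro lt
    rw [hvdef, show BFmat b F = Matrix.diagonal (maskIn F b) from rfl, Matrix.mulVec_diagonal]
    by_cases hF : lt ∈ F <;> simp [maskIn, hF]
  have hKFv : (KF *ᵥ vv) l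
      = ∑ lt ∈ F, KF l lt * (b lt * (((incM src tgt)ᵀ *ᵥ y) lt)) := by
    have hexp : (KF *ᵥ vv) l = ∑ lt, KF l lt * vv lt := rfl
    rw [hexp, Finset.sum_congr rfl fun lt _ => by rw [hvl lt]]
    simp only [mul_ite, mul_zero]
    rw [Finset.sum_ite_mem, Finset.univ_inter]
  have hΔl : ∑ t, ∑ k, α k * ptdf src tgt b l k (jmap t) * ftie t
      = ∑ t, ftie t * ∑ k, α k * ptdf src tgt b l k (jmap t) := by
    refine Finset.sum_congr rfl fun t _ => ?_
    rw [← Finset.sum_mul, mul_comm]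
  have hrewrite : ∑ lt ∈ F, KF l lt * (b lt * (((incM src tgt)ᵀ *ᵥ y) lt))
      = ∑ lt ∈ F, KF l lt *
          (f lt + ∑ t, ∑ k, α k * ptdf src tgt b lt k (jmap t) * ftie t) :=
    Finset.sum_congr rfl fun lt _ => by rw [hgf lt]
  rw [hftl, hBmFl, hKFv, hgf l, hrewrite, ← hΔl]
  ring
end
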